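/- arXiv:2212.09037 — 7 statements merged into one kernel-verified Lean document; each statement's English description precedes it below -/
import Mathlib

section
/- Let a,b ∈ ℂ∖{0} with |a| ≠ |b|, |a||b| ≠ 1, and a·conj(b) ∉ ℝ (so a, b and 0 are not collinear). Then: (1) LIS[a,b,−1/conj(a),−1/conj(b)] = (b(1+|a|²) − a(1+|b|²))/(|a|² − |b|²); (2) LIS[a,b,1/conj(a),1/conj(b)] = (a(1−|b|²) − b(1−|a|²))/(|a|² − |b|²); (3) LIS[a,1/conj(b),b,1/conj(a)] = (a(1−|b|²) + b(1−|a|²))/(1 − |a|²|b|²); (4) LIS[a,−1/conj(b),b,−1/conj(a)] = (a(1+|b|²) + b(1+|a|²))/(1 − |a|²|b|²). In each case the denominator (conj of first pair difference)·(second pair difference) − … in the defining expression of LIS is nonzero. -/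
/-!
Write `z' = k / conj z` for the image of `z` under inversion in the circle `|z|² = k` (an
anti-inversion when `k < 0`); the theorem is the cases `k = ±1`. After multiplication by
`a b ā b̄`, the denominator of `LIS` factors as `-k (ā b - a b̄)(|a|² - |b|²)` for the lines `a b`
and `a' b'`, and as `(ā b - a b̄)(|a|²|b|² - k²)` for the lines `a b'` and `b a'`. The factor
`ā b - a b̄` vanishes exactly when `0, a, b` are collinear, the other one is nonzero by the norm
hypotheses, and the closed forms are then rational identities.
-/

open ComplexConjugate

/-- The intersection point of the Euclidean lines through `a, b` and through `c, d`. -/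
noncomputable def LIS (a b c d : ℂ) : ℂ :=
  ((conj a * b - a * conj b) * (c - d) - (conj c * d - c * conj d) * (a - b)) /
    ((conj a - conj b) * (c - d) - (conj c - conj d) * (a - b))

/-- The denominator in the defining expression of `LIS`. -/
noncomputable def LISden (a b c d : ℂ) : ℂ :=
  (conj a - conj b) * (c - d) - (conj c - conj d) * (a - b)

theorem LIS_eq_div_LISden (a b c d : ℂ) :
    LIS a b c d =
      ((conj a * b - a * conj b) * (c - d) - (conj c * d - c * conj d) * (a - b)) / LISden a b c d :=
  rfl

theorem conj_mul_ne_mul_conj {a b : ℂ} (h : a * conj b ∉ Set.range Complex.ofReal) :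
    conj a * b ≠ a * conj b := by
  intro hab
  refine h ⟨(a * conj b).re, (Complex.conj_eq_iff_re.mp ?_)⟩
  rw [map_mul, Complex.conj_conj, hab]

section Inversion

variable {a b : ℂ} (k : ℝ)

theorem LISden_inverses_mul (ha : a ≠ 0) (hb : b ≠ 0) :
    LISden a b (k / conj a) (k / conj b) * (a * b * conj a * conj b) =
      -k * (conj a * b - a * conj b) * (a * conj a - b * conj b) := by
  have : conj a ≠ 0 := (map_ne_zero _).mpr ha
  have : conj b ≠ 0 := (map_ne_zero _).mpr hb
  simp only [LISden, map_div₀, Complex.conj_ofReal, Complex.conj_conj]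
  field_simp
  ring

theorem LISden_crossed_inverses_mul (ha : a ≠ 0) (hb : b ≠ 0) :
    LISden a (k / conj b) b (k / conj a) * (a * b * conj a * conj b) =
      (conj a * b - a * conj b) * (a * conj a * (b * conj b) - k ^ 2) := by
  have : conj a ≠ 0 := (map_ne_zero _).mpr ha
  have : conj b ≠ 0 := (map_ne_zero _).mpr hb
  simp only [LISden, map_div₀, Complex.conj_ofReal, Complex.conj_conj]
  field_simp
  ring

theorem LIS_inverses (ha : a ≠ 0) (hb : b ≠ 0) (hk : k ≠ 0) (hab : conj a * b ≠ a * conj b)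
    (hn : ‖a‖ ≠ ‖b‖) :
    LISden a b (k / conj a) (k / conj b) ≠ 0 ∧
      LIS a b (k / conj a) (k / conj b) =
        (b * ((‖a‖ : ℂ) ^ 2 - k) - a * ((‖b‖ : ℂ) ^ 2 - k)) / ((‖a‖ : ℂ) ^ 2 - (‖b‖ : ℂ) ^ 2) := by
  have hn' : (‖a‖ : ℂ) ^ 2 - (‖b‖ : ℂ) ^ 2 ≠ 0 := by
    norm_cast
    exact sub_ne_zero.mpr fun h => hn ((sq_eq_sq₀ (norm_nonneg a) (norm_nonneg b)).mp h)
  have hden : LISden a b (k / conj a) (k / conj b) ≠ 0 := by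
    refine left_ne_zero_of_mul (b := a * b * conj a * conj b) ?_
    rw [LISden_inverses_mul k ha hb, Complex.mul_conj', Complex.mul_conj']
    have : (k : ℂ) ≠ 0 := Complex.ofReal_ne_zero.mpr hk
    exact mul_ne_zero (mul_ne_zero (neg_ne_zero.mpr this) (sub_ne_zero.mpr hab)) hn'
  refine ⟨hden, ?_⟩
  have : conj a ≠ 0 := (map_ne_zero _).mpr ha
  have : conj b ≠ 0 := (map_ne_zero _).mpr hb
  rw [LIS_eq_div_LISden, div_eq_div_iff hden hn', ← Complex.mul_conj', ← Complex.mul_conj']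
  simp only [LISden, map_div₀, Complex.conj_ofReal, Complex.conj_conj]
  field_simp
  ring

theorem LIS_crossed_inverses (ha : a ≠ 0) (hb : b ≠ 0) (hab : conj a * b ≠ a * conj b)
    (hn : ‖a‖ * ‖b‖ ≠ |k|) :
    LISden a (k / conj b) b (k / conj a) ≠ 0 ∧
      LIS a (k / conj b) b (k / conj a) =
        k * (a * (k - (‖b‖ : ℂ) ^ 2) + b * (k - (‖a‖ : ℂ) ^ 2)) /
          (k ^ 2 - (‖a‖ : ℂ) ^ 2 * (‖b‖ : ℂ) ^ 2) := by
  have hn' : (k : ℂ) ^ 2 - (‖a‖ : ℂ) ^ 2 * (‖b‖ : ℂ) ^ 2 ≠ 0 := by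
    norm_cast
    rw [← ne_eq, sub_ne_zero, ← mul_pow, ← sq_abs k]
    exact fun h => hn ((sq_eq_sq₀ (abs_nonneg k) (by positivity)).mp h).symm
  have hden : LISden a (k / conj b) b (k / conj a) ≠ 0 := by
    refine left_ne_zero_of_mul (b := a * b * conj a * conj b) ?_
    rw [LISden_crossed_inverses_mul k ha hb, Complex.mul_conj', Complex.mul_conj']
    exact mul_ne_zero (sub_ne_zero.mpr hab) (by rwa [← neg_ne_zero, neg_sub])
  refine ⟨hden, ?_⟩
  have : conj a ≠ 0 := (map_ne_zero _).mpr ha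
  have : conj b ≠ 0 := (map_ne_zero _).mpr hb
  rw [LIS_eq_div_LISden, div_eq_div_iff hden hn', ← Complex.mul_conj', ← Complex.mul_conj']
  simp only [LISden, map_div₀, Complex.conj_ofReal, Complex.conj_conj]
  field_simp
  ring

end Inversion

theorem stmt0 (a b : ℂ) (ha : a ≠ 0) (hb : b ≠ 0)
    (hab : ‖a‖ ≠ ‖b‖)
    (hab1 : ‖a‖ * ‖b‖ ≠ 1)
    (hnc : a * conj b ∉ Set.range (Complex.ofReal)) :
    (LISden a b (-1 / conj a) (-1 / conj b) ≠ 0 ∧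
      LIS a b (-1 / conj a) (-1 / conj b) =
        (b * (1 + (‖a‖ : ℂ) ^ 2) - a * (1 + (‖b‖ : ℂ) ^ 2)) /
          ((‖a‖ : ℂ) ^ 2 - (‖b‖ : ℂ) ^ 2)) ∧
    (LISden a b (1 / conj a) (1 / conj b) ≠ 0 ∧
      LIS a b (1 / conj a) (1 / conj b) =
        (a * (1 - (‖b‖ : ℂ) ^ 2) - b * (1 - (‖a‖ : ℂ) ^ 2)) /
          ((‖a‖ : ℂ) ^ 2 - (‖b‖ : ℂ) ^ 2)) ∧
    (LISden a (1 / conj b) b (1 / conj a) ≠ 0 ∧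
      LIS a (1 / conj b) b (1 / conj a) =
        (a * (1 - (‖b‖ : ℂ) ^ 2) + b * (1 - (‖a‖ : ℂ) ^ 2)) /
          (1 - (‖a‖ : ℂ) ^ 2 * (‖b‖ : ℂ) ^ 2)) ∧
    (LISden a (-1 / conj b) b (-1 / conj a) ≠ 0 ∧
      LIS a (-1 / conj b) b (-1 / conj a) =
        (a * (1 + (‖b‖ : ℂ) ^ 2) + b * (1 + (‖a‖ : ℂ) ^ 2)) /
          (1 - (‖a‖ : ℂ) ^ 2 * (‖b‖ : ℂ) ^ 2)) := by
  have hab' := conj_mul_ne_mul_conj hnc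
  have hab1' : ‖a‖ * ‖b‖ ≠ |(-1 : ℝ)| := by rwa [abs_neg, abs_one]
  obtain ⟨hden1, hLIS1⟩ := LIS_inverses (-1) ha hb (by norm_num) hab' hab
  obtain ⟨hden2, hLIS2⟩ := LIS_inverses 1 ha hb one_ne_zero hab' hab
  obtain ⟨hden3, hLIS3⟩ := LIS_crossed_inverses 1 ha hb hab' (by rwa [abs_one])
  obtain ⟨hden4, hLIS4⟩ := LIS_crossed_inverses (-1) ha hb hab' hab1'
  push_cast at hden1 hLIS1 hden2 hLIS2 hden3 hLIS3 hden4 hLIS4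
  refine ⟨⟨hden1, ?_⟩, ⟨hden2, ?_⟩, ⟨hden3, ?_⟩, ⟨hden4, ?_⟩⟩
  · rw [hLIS1]; ring
  · rw [hLIS2]; ring
  · rw [hLIS3]; ring
  · rw [hLIS4]; ring
end

section
/- For all x,y in the open unit disk 𝔹² = {z ∈ ℂ : |z| < 1}, the point z = (y(1−|x|²) + x(1−|y|²))/(1 − |x|²|y|² + |1 − x·conj(y)|·√((1−|x|²)(1−|y|²))) lies in 𝔹² and satisfies ρ(x,z) = ρ(y,z) = ρ(x,y)/2; that is, z is the hyperbolic midpoint of x and y. -/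
open ComplexConjugate

/-- The hyperbolic metric of the unit disk. -/
noncomputable def rho (x y : ℂ) : ℝ :=
  2 * Real.arsinh (‖x - y‖ /
    Real.sqrt ((1 - ‖x‖ ^ 2) * (1 - ‖y‖ ^ 2)))

/-!
Write `c = |1 - x ȳ|`, `s = √((1 - |x|²)(1 - |y|²))` and `D` for the denominator of `z`.
The identity `c² = |x - y|² + s²` gives `cosh (ρ(x,y)/2) = c / s`. A direct computation gives
`1 - |z|² = 2cs / D` and `|x - z|² = (1 - |x|²) c (c - s) / D`, hence
`sinh² (ρ(x,z)/2) = (c - s) / (2s) = (cosh (ρ(x,y)/2) - 1) / 2 = sinh² (ρ(x,y)/4)`.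
Since `z` is symmetric in `x` and `y`, the same holds for `ρ(y,z)`.
-/

theorem Real.sinh_half_eq_sqrt {a : ℝ} (ha : 0 ≤ a) : sinh (a / 2) = √((cosh a - 1) / 2) := by
  have h : cosh a = 1 + 2 * sinh (a / 2) ^ 2 := by
    conv_lhs => rw [← mul_div_cancel₀ a (two_ne_zero' ℝ), cosh_two_mul, cosh_sq]
    ring
  rw [h, show (1 + 2 * sinh (a / 2) ^ 2 - 1) / 2 = sinh (a / 2) ^ 2 by ring,
    Real.sqrt_sq (sinh_nonneg_iff.mpr (by linarith))]

namespace Complex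

theorem norm_ofReal_mul_add_ofReal_mul_sq (a b : ℝ) (x y : ℂ) :
    ‖(a : ℂ) * x + b * y‖ ^ 2 =
      a ^ 2 * ‖x‖ ^ 2 + b ^ 2 * ‖y‖ ^ 2 + 2 * a * b * (x * conj y).re := by
  simp only [Complex.sq_norm, normSq_apply, add_re, add_im, mul_re, mul_im, conj_re, conj_im,
    ofReal_re, ofReal_im]
  ring

theorem norm_one_sub_mul_conj_sq (x y : ℂ) :
    ‖1 - x * conj y‖ ^ 2 = 1 - 2 * (x * conj y).re + ‖x‖ ^ 2 * ‖y‖ ^ 2 := by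
  simp only [Complex.sq_norm, normSq_apply, sub_re, sub_im, mul_re, mul_im, conj_re, conj_im,
    one_re, one_im]
  ring

theorem norm_one_sub_mul_conj_sq_eq_norm_sub_sq_add (x y : ℂ) :
    ‖1 - x * conj y‖ ^ 2 = ‖x - y‖ ^ 2 + (1 - ‖x‖ ^ 2) * (1 - ‖y‖ ^ 2) := by
  have h := norm_ofReal_mul_add_ofReal_mul_sq 1 (-1) x y
  rw [ofReal_one, ofReal_neg, ofReal_one, one_mul, neg_one_mul, ← sub_eq_add_neg] at h
  rw [norm_one_sub_mul_conj_sq, h]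
  ring

theorem sqrt_le_norm_one_sub_mul_conj (x y : ℂ) :
    √((1 - ‖x‖ ^ 2) * (1 - ‖y‖ ^ 2)) ≤ ‖1 - x * conj y‖ :=
  Real.sqrt_le_iff.2 ⟨norm_nonneg _, by
    rw [norm_one_sub_mul_conj_sq_eq_norm_sub_sq_add]; nlinarith [sq_nonneg ‖x - y‖]⟩

theorem norm_div_ofReal_sq (z : ℂ) (a : ℝ) : ‖z / a‖ ^ 2 = ‖z‖ ^ 2 / a ^ 2 := by
  rw [norm_div, norm_real, Real.norm_eq_abs, div_pow, sq_abs]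

end Complex

open Complex

theorem one_sub_sq_mul_one_sub_sq_pos {x y : ℂ} (hx : ‖x‖ < 1) (hy : ‖y‖ < 1) :
    0 < (1 - ‖x‖ ^ 2) * (1 - ‖y‖ ^ 2) :=
  mul_pos (by nlinarith [norm_nonneg x]) (by nlinarith [norm_nonneg y])

theorem rho_comm (x y : ℂ) : rho x y = rho y x := by
  rw [rho, rho, norm_sub_rev, mul_comm (1 - ‖x‖ ^ 2)]

theorem rho_nonneg (x y : ℂ) : 0 ≤ rho x y :=
  mul_nonneg zero_le_two (Real.arsinh_nonneg_iff.2 (by positivity))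

theorem sinh_half_rho (x y : ℂ) :
    Real.sinh (rho x y / 2) = ‖x - y‖ / √((1 - ‖x‖ ^ 2) * (1 - ‖y‖ ^ 2)) := by
  rw [rho, mul_div_cancel_left₀ _ two_ne_zero, Real.sinh_arsinh]

theorem cosh_half_rho {x y : ℂ} (hx : ‖x‖ < 1) (hy : ‖y‖ < 1) :
    Real.cosh (rho x y / 2) = ‖1 - x * conj y‖ / √((1 - ‖x‖ ^ 2) * (1 - ‖y‖ ^ 2)) := by
  have hs := Real.sqrt_pos.2 (one_sub_sq_mul_one_sub_sq_pos hx hy)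
  have hs_sq := Real.sq_sqrt (one_sub_sq_mul_one_sub_sq_pos hx hy).le
  have hc := norm_one_sub_mul_conj_sq_eq_norm_sub_sq_add x y
  rw [← Real.sqrt_sq (Real.cosh_pos _).le, Real.cosh_sq', sinh_half_rho,
    ← Real.sqrt_sq (div_nonneg (norm_nonneg (1 - x * conj y)) hs.le)]
  congr 1
  set s := √((1 - ‖x‖ ^ 2) * (1 - ‖y‖ ^ 2))
  rw [div_pow, div_pow, hc, ← hs_sq]
  field_simp
  ring

noncomputable def hypMidpointDenom (x y : ℂ) : ℝ :=
  1 - ‖x‖ ^ 2 * ‖y‖ ^ 2 + ‖1 - x * conj y‖ * √((1 - ‖x‖ ^ 2) * (1 - ‖y‖ ^ 2))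

noncomputable def hypMidpoint (x y : ℂ) : ℂ :=
  (y * (1 - (‖x‖ : ℂ) ^ 2) + x * (1 - (‖y‖ : ℂ) ^ 2)) / (hypMidpointDenom x y : ℂ)

theorem hypMidpoint_comm (x y : ℂ) : hypMidpoint x y = hypMidpoint y x := by
  have h : ‖1 - y * conj x‖ = ‖1 - x * conj y‖ := by
    rw [← norm_conj, map_sub, map_mul, conj_conj, map_one, mul_comm]
  rw [hypMidpoint, hypMidpoint, hypMidpointDenom, hypMidpointDenom, h, add_comm (y * _),
    mul_comm (‖y‖ ^ 2), mul_comm (1 - ‖y‖ ^ 2)]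

theorem hypMidpointDenom_pos {x y : ℂ} (hx : ‖x‖ < 1) (hy : ‖y‖ < 1) :
    0 < hypMidpointDenom x y := by
  have hxy : ‖x‖ ^ 2 * ‖y‖ ^ 2 < 1 :=
    mul_lt_one_of_nonneg_of_lt_one_left (sq_nonneg _) (pow_lt_one₀ (norm_nonneg x) hx two_ne_zero)
      (pow_le_one₀ (norm_nonneg y) hy.le)
  have hcs := mul_nonneg (norm_nonneg (1 - x * conj y))
    (Real.sqrt_nonneg ((1 - ‖x‖ ^ 2) * (1 - ‖y‖ ^ 2)))
  rw [hypMidpointDenom]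
  linarith

theorem one_sub_norm_hypMidpoint_sq {x y : ℂ} (hx : ‖x‖ < 1) (hy : ‖y‖ < 1) :
    1 - ‖hypMidpoint x y‖ ^ 2 =
      2 * ‖1 - x * conj y‖ * √((1 - ‖x‖ ^ 2) * (1 - ‖y‖ ^ 2)) / hypMidpointDenom x y := by
  have hD := (hypMidpointDenom_pos hx hy).ne'
  have hs := Real.sq_sqrt (one_sub_sq_mul_one_sub_sq_pos hx hy).le
  have hc := norm_one_sub_mul_conj_sq x y
  have hnum : y * (1 - (‖x‖ : ℂ) ^ 2) + x * (1 - (‖y‖ : ℂ) ^ 2) =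
      ((1 - ‖y‖ ^ 2 : ℝ) : ℂ) * x + ((1 - ‖x‖ ^ 2 : ℝ) : ℂ) * y := by
    push_cast; ring
  rw [hypMidpoint, hnum, norm_div_ofReal_sq, norm_ofReal_mul_add_ofReal_mul_sq]
  set c := ‖1 - x * conj y‖
  set s := √((1 - ‖x‖ ^ 2) * (1 - ‖y‖ ^ 2))
  have hD_eq : hypMidpointDenom x y = 1 - ‖x‖ ^ 2 * ‖y‖ ^ 2 + c * s := rfl
  -- `‖numerator‖² = (1 - ‖x‖²‖y‖²)² - c²s²`, so `D² - ‖numerator‖² = 2csD`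
  field_simp
  linear_combination (hypMidpointDenom x y + (1 - ‖x‖ ^ 2 * ‖y‖ ^ 2 + c * s) - 2 * c * s) * hD_eq
    - c ^ 2 * hs - (1 - ‖x‖ ^ 2) * (1 - ‖y‖ ^ 2) * hc

theorem norm_hypMidpoint_lt_one {x y : ℂ} (hx : ‖x‖ < 1) (hy : ‖y‖ < 1) :
    ‖hypMidpoint x y‖ < 1 := by
  have hs := Real.sqrt_pos.2 (one_sub_sq_mul_one_sub_sq_pos hx hy)
  have hc := hs.trans_le (sqrt_le_norm_one_sub_mul_conj x y)
  have h : 0 < 1 - ‖hypMidpoint x y‖ ^ 2 := by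
    rw [one_sub_norm_hypMidpoint_sq hx hy]
    exact div_pos (by positivity) (hypMidpointDenom_pos hx hy)
  nlinarith [norm_nonneg (hypMidpoint x y)]

theorem norm_sub_hypMidpoint_sq {x y : ℂ} (hx : ‖x‖ < 1) (hy : ‖y‖ < 1) :
    ‖x - hypMidpoint x y‖ ^ 2 = (1 - ‖x‖ ^ 2) * ‖1 - x * conj y‖ *
      (‖1 - x * conj y‖ - √((1 - ‖x‖ ^ 2) * (1 - ‖y‖ ^ 2))) / hypMidpointDenom x y := by
  have hD := (hypMidpointDenom_pos hx hy).ne'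
  have hs := Real.sq_sqrt (one_sub_sq_mul_one_sub_sq_pos hx hy).le
  have hc := norm_one_sub_mul_conj_sq x y
  set c := ‖1 - x * conj y‖
  set s := √((1 - ‖x‖ ^ 2) * (1 - ‖y‖ ^ 2))
  have hD_eq : hypMidpointDenom x y = 1 - ‖x‖ ^ 2 * ‖y‖ ^ 2 + c * s := rfl
  have hdiff : x - hypMidpoint x y =
      (((‖y‖ ^ 2 * (1 - ‖x‖ ^ 2) + c * s : ℝ) : ℂ) * x + ((‖x‖ ^ 2 - 1 : ℝ) : ℂ) * y) /
        (hypMidpointDenom x y : ℂ) := by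
    rw [hypMidpoint, eq_div_iff (ofReal_ne_zero.2 hD), sub_mul,
      div_mul_cancel₀ _ (ofReal_ne_zero.2 hD), hD_eq]
    push_cast; ring
  rw [hdiff, norm_div_ofReal_sq, norm_ofReal_mul_add_ofReal_mul_sq]
  field_simp
  linear_combination -(‖y‖ ^ 2 * (1 - ‖x‖ ^ 2) + c * s) * (1 - ‖x‖ ^ 2) * hc + c ^ 2 * hs
    - (1 - ‖x‖ ^ 2) * c * (c - s) * hD_eq

theorem rho_hypMidpoint {x y : ℂ} (hx : ‖x‖ < 1) (hy : ‖y‖ < 1) :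
    rho x (hypMidpoint x y) = rho x y / 2 := by
  have hm := norm_hypMidpoint_lt_one hx hy
  have hm_sq := one_sub_norm_hypMidpoint_sq hx hy
  have hsub := norm_sub_hypMidpoint_sq hx hy
  have hs := Real.sqrt_pos.2 (one_sub_sq_mul_one_sub_sq_pos hx hy)
  have hc := (hs.trans_le (sqrt_le_norm_one_sub_mul_conj x y)).ne'
  have hx' : 0 < 1 - ‖x‖ ^ 2 := by nlinarith [norm_nonneg x]
  have hD := (hypMidpointDenom_pos hx hy).ne'
  have h : Real.sinh (rho x (hypMidpoint x y) / 2) = Real.sinh (rho x y / 2 / 2) := by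
    rw [sinh_half_rho, Real.sinh_half_eq_sqrt (div_nonneg (rho_nonneg x y) zero_le_two),
      cosh_half_rho hx hy, ← Real.sqrt_sq (by positivity : 0 ≤ ‖x - hypMidpoint x y‖ /
        √((1 - ‖x‖ ^ 2) * (1 - ‖hypMidpoint x y‖ ^ 2)))]
    rw [div_pow, Real.sq_sqrt (one_sub_sq_mul_one_sub_sq_pos hx hm).le, hsub, hm_sq]
    field_simp
  linarith [Real.sinh_injective h]

theorem stmt3 (x y : ℂ) (hx : ‖x‖ < 1) (hy : ‖y‖ < 1)
    (z : ℂ)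
    (hz : z = (y * (1 - (‖x‖ : ℂ) ^ 2) + x * (1 - (‖y‖ : ℂ) ^ 2)) /
      ((1 - ‖x‖ ^ 2 * ‖y‖ ^ 2 +
        ‖1 - x * conj y‖ *
          Real.sqrt ((1 - ‖x‖ ^ 2) * (1 - ‖y‖ ^ 2)) : ℝ) : ℂ)) :
    ‖z‖ < 1 ∧ rho x z = rho x y / 2 ∧ rho y z = rho x y / 2 := by
  obtain rfl : z = hypMidpoint x y := hz
  refine ⟨norm_hypMidpoint_lt_one hx hy, rho_hypMidpoint hx hy, ?_⟩
  rw [hypMidpoint_comm, rho_hypMidpoint hy hx, rho_comm]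
end

section
/- Let s ≥ 0 be a real number and let a,b ∈ 𝔹² satisfy |a + is| = √(1+s²), |b − is| = √(1+s²), Im a > 0 and Im b < 0 (so a and b lie on opposite boundary arcs of the lens-shaped domain B(−is,√(1+s²)) ∩ B(is,√(1+s²)) ⊆ closure(𝔹²), which is symmetric with respect to the real axis and bounded by two circular arcs with endpoints −1 and 1). Then the hyperbolic midpoint m of a and b (for the hyperbolic metric of 𝔹²) is real, i.e., Im m = 0. -/
open ComplexConjugate

/-!
In the hyperboloid model, where `cosh ρ` is the Minkowski form, the hyperbolic midpoint of `X`
and `Y` is `(X + Y) / (2 cosh (ρ(X, Y) / 2))`: the difference is a null vector orthogonal to a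
timelike one, hence zero. The boundary arcs of the lens are the hypercycles at heights `±1/s`
over the real geodesic, measured by the imaginary part of the spatial coordinate; the two heights
cancel in `X + Y`, so the midpoint lies on the real axis.
-/

open RealInnerProductSpace

theorem one_sub_sq_norm_pos {x : ℂ} (hx : ‖x‖ < 1) : 0 < 1 - ‖x‖ ^ 2 := by
  nlinarith [norm_nonneg x]

section Minkowski

variable {E : Type*} [NormedAddCommGroup E] [InnerProductSpace ℝ E]

def minkowskiForm (p q : ℝ × E) : ℝ := p.1 * q.1 - ⟪p.2, q.2⟫

theorem minkowskiForm_comm (p q : ℝ × E) : minkowskiForm p q = minkowskiForm q p := by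
  rw [minkowskiForm, minkowskiForm, mul_comm, real_inner_comm]

theorem eq_zero_of_minkowskiForm_eq_zero {w z : ℝ × E} (hz : 0 < minkowskiForm z z)
    (hw : minkowskiForm w w = 0) (hwz : minkowskiForm w z = 0) : w = 0 := by
  obtain ⟨t, v⟩ := w
  obtain ⟨t', v'⟩ := z
  simp only [minkowskiForm, real_inner_self_eq_norm_mul_norm] at hz hw hwz
  have hv : ‖v‖ = |t| := by
    rw [← abs_norm]; exact (sq_eq_sq_iff_abs_eq_abs _ _).mp (by linear_combination -hw)
  have hv' : ‖v'‖ < |t'| := by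
    rw [← abs_norm]; exact sq_lt_sq.mp (by linear_combination hz)
  have hcs : |t| * |t'| ≤ |t| * ‖v'‖ := by
    rw [← abs_mul, ← hv, show t * t' = ⟪v, v'⟫ by linarith]
    exact abs_real_inner_le_norm v v'
  have ht : t = 0 := abs_eq_zero.mp (by nlinarith [abs_nonneg t])
  rw [ht, abs_zero, norm_eq_zero] at hv
  rw [ht, hv, Prod.mk_zero_zero]

theorem add_eq_smul_of_minkowskiForm_eq {X Y M : ℝ × E} {c : ℝ}
    (hX : minkowskiForm X X = 1) (hY : minkowskiForm Y Y = 1) (hM : minkowskiForm M M = 1)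
    (hXM : minkowskiForm X M = c) (hMY : minkowskiForm M Y = c)
    (hXY : minkowskiForm X Y = 2 * c ^ 2 - 1) : X + Y = (2 * c) • M := by
  rw [← sub_eq_zero]
  rw [minkowskiForm_comm] at hMY
  apply eq_zero_of_minkowskiForm_eq_zero (z := M) (by rw [hM]; exact one_pos)
  all_goals
    simp only [minkowskiForm, Prod.fst_sub, Prod.fst_add, Prod.smul_fst, smul_eq_mul,
      Prod.snd_sub, Prod.snd_add, Prod.smul_snd, inner_sub_left, inner_sub_right,
      inner_add_left, inner_add_right, real_inner_smul_left, real_inner_smul_right,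
      real_inner_comm X.2 M.2, real_inner_comm Y.2 M.2, real_inner_comm X.2 Y.2] at *
  · linear_combination hX + hY + 4 * c ^ 2 * hM + 2 * hXY - 4 * c * hXM - 4 * c * hMY
  · linear_combination hXM + hMY - 2 * c * hM

end Minkowski

/-- Lift of the unit disk to the upper sheet of the hyperboloid `⟪X, X⟫ = 1`. -/
noncomputable def diskToHyperboloid (x : ℂ) : ℝ × ℂ :=
  ((1 + ‖x‖ ^ 2) / (1 - ‖x‖ ^ 2), (2 / (1 - ‖x‖ ^ 2)) • x)

theorem cosh_rho_eq_minkowskiForm {x y : ℂ} (hx : ‖x‖ < 1) (hy : ‖y‖ < 1) :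
    Real.cosh (rho x y) = minkowskiForm (diskToHyperboloid x) (diskToHyperboloid y) := by
  have hx' := one_sub_sq_norm_pos hx
  have hy' := one_sub_sq_norm_pos hy
  rw [rho, Real.cosh_two_mul, Real.cosh_sq', Real.sinh_arsinh, div_pow,
    Real.sq_sqrt (mul_pos hx' hy').le, norm_sub_sq_real, minkowskiForm, diskToHyperboloid,
    diskToHyperboloid, real_inner_smul_left, real_inner_smul_right]
  field_simp
  ring

theorem minkowskiForm_diskToHyperboloid_self {x : ℂ} (hx : ‖x‖ < 1) :
    minkowskiForm (diskToHyperboloid x) (diskToHyperboloid x) = 1 := by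
  rw [← cosh_rho_eq_minkowskiForm hx hx, rho, sub_self, norm_zero, zero_div, Real.arsinh_zero,
    mul_zero, Real.cosh_zero]

theorem diskToHyperboloid_add_eq_smul {a b m : ℂ}
    (ha : ‖a‖ < 1) (hb : ‖b‖ < 1) (hm : ‖m‖ < 1)
    (ham : rho a m = rho a b / 2) (hmb : rho m b = rho a b / 2) :
    diskToHyperboloid a + diskToHyperboloid b =
      (2 * Real.cosh (rho a b / 2)) • diskToHyperboloid m := by
  have hab : Real.cosh (rho a b) = 2 * Real.cosh (rho a b / 2) ^ 2 - 1 := by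
    have h := Real.cosh_two_mul (rho a b / 2)
    rw [mul_div_cancel₀ _ two_ne_zero] at h
    linear_combination h - Real.cosh_sq (rho a b / 2)
  apply add_eq_smul_of_minkowskiForm_eq (minkowskiForm_diskToHyperboloid_self ha)
    (minkowskiForm_diskToHyperboloid_self hb) (minkowskiForm_diskToHyperboloid_self hm)
  · rw [← cosh_rho_eq_minkowskiForm ha hm, ham]
  · rw [← cosh_rho_eq_minkowskiForm hm hb, hmb]
  · rw [← cosh_rho_eq_minkowskiForm ha hb, hab]

theorem im_diskToHyperboloid (x : ℂ) :
    (diskToHyperboloid x).2.im = 2 / (1 - ‖x‖ ^ 2) * x.im := by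
  rw [diskToHyperboloid, Complex.smul_im, smul_eq_mul]

theorem im_diskToHyperboloid_of_norm_add_I_mul {x : ℂ} {s : ℝ} (hx : ‖x‖ < 1)
    (h : ‖x + Complex.I * s‖ = √(1 + s ^ 2)) : (diskToHyperboloid x).2.im = s⁻¹ := by
  have h2 := congrArg (· ^ 2) h
  simp only [Real.sq_sqrt (by positivity : (0:ℝ) ≤ 1 + s ^ 2), Complex.sq_norm,
    Complex.normSq_apply, Complex.add_re, Complex.add_im, Complex.mul_re, Complex.mul_im,
    Complex.I_re, Complex.I_im, Complex.ofReal_re, Complex.ofReal_im] at h2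
  have hxs : 1 - ‖x‖ ^ 2 = 2 * s * x.im := by
    rw [Complex.sq_norm, Complex.normSq_apply]
    linear_combination -h2
  have hpos : 0 < 2 * s * x.im := hxs ▸ one_sub_sq_norm_pos hx
  obtain ⟨h2s, him⟩ := mul_ne_zero_iff.mp hpos.ne'
  have hs := right_ne_zero_of_mul h2s
  rw [im_diskToHyperboloid, hxs]
  field_simp

theorem im_diskToHyperboloid_eq_zero_iff {x : ℂ} (hx : ‖x‖ < 1) :
    (diskToHyperboloid x).2.im = 0 ↔ x.im = 0 := by
  rw [im_diskToHyperboloid, mul_eq_zero, div_eq_zero_iff]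
  simp only [two_ne_zero, (one_sub_sq_norm_pos hx).ne', or_self, false_or]

theorem stmt11_general (s : ℝ) (a b : ℂ)
    (ha : ‖a‖ < 1) (hb : ‖b‖ < 1)
    (haV : ‖a + Complex.I * (s : ℂ)‖ = Real.sqrt (1 + s ^ 2))
    (hbV : ‖b - Complex.I * (s : ℂ)‖ = Real.sqrt (1 + s ^ 2))
    (m : ℂ) (hm : ‖m‖ < 1)
    (hm1 : rho a m = rho a b / 2) (hm2 : rho m b = rho a b / 2) :
    m.im = 0 := by
  have hbV' : ‖b + Complex.I * ((-s : ℝ) : ℂ)‖ = √(1 + (-s) ^ 2) := by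
    rwa [Complex.ofReal_neg, mul_neg, ← sub_eq_add_neg, neg_sq]
  have hsum := congrArg (fun p : ℝ × ℂ => p.2.im)
    (diskToHyperboloid_add_eq_smul ha hb hm hm1 hm2)
  simp only [Prod.snd_add, Complex.add_im, Prod.smul_snd, Complex.smul_im, smul_eq_mul,
    im_diskToHyperboloid_of_norm_add_I_mul ha haV, im_diskToHyperboloid_of_norm_add_I_mul hb hbV',
    inv_neg, add_neg_cancel] at hsum
  have hc : 2 * Real.cosh (rho a b / 2) ≠ 0 := by positivity
  exact (im_diskToHyperboloid_eq_zero_iff hm).mp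
    ((mul_eq_zero.mp hsum.symm).resolve_left hc)

theorem stmt11 (s : ℝ) (hs : 0 ≤ s) (a b : ℂ)
    (ha : ‖a‖ < 1) (hb : ‖b‖ < 1)
    (haV : ‖a + Complex.I * (s : ℂ)‖ = Real.sqrt (1 + s ^ 2))
    (hbV : ‖b - Complex.I * (s : ℂ)‖ = Real.sqrt (1 + s ^ 2))
    (haIm : 0 < a.im) (hbIm : b.im < 0)
    (m : ℂ) (hm : ‖m‖ < 1)
    (hm1 : rho a m = rho a b / 2) (hm2 : rho m b = rho a b / 2) :
    m.im = 0 :=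
  stmt11_general s a b ha hb haV hbV m hm hm1 hm2
end

section
/- Let a,b ∈ 𝔹²∖{0} with a·conj(b) ∉ ℝ (a, b and 0 not collinear). Let c ∈ ℂ satisfy |c − a| = |c + 1/conj(a)| = |c − 1/conj(b)| (so c is the center of the stereographic projection of the great circle through a and b/|b|² = 1/conj(b)), let u ∈ ℂ satisfy |u| = 1 and |u − c| = |a − c|, and let v ∈ ℂ satisfy |v − a| = |v − b| = |v − 1/conj(a)| (so v is the center of the circle through a, b and a/|a|² = 1/conj(a), which is orthogonal to the unit circle). Then the hyperbolic midpoint m of a and b lies on the closed Euclidean segment from −u to u and satisfies |m − v| = |a − v|. -/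
open ComplexConjugate

/-!
Put `α = 1 - ‖a‖²`, `β = 1 - ‖b‖²` and `s = sinh² (ρ(a, b) / 4)`. As
`sinh² (ρ(x, y) / 2) = ‖x - y‖² / ((1 - ‖x‖²)(1 - ‖y‖²))`, the midpoint conditions and
`sinh 2t = 2 sinh t cosh t` give three quadratic relations between `a`, `b`, `m`, and these force
`(α + β + 2 s α β) m = β a + α b`.

The conditions on `c`, `u` and `v` are linear in the centre: they say `2⟪a, c⟫ = ‖a‖² - 1`,
`2⟪b, c⟫ = 1 - ‖b‖²`, `⟪u, c⟫ = 0` and `2⟪x, v⟫ = ‖x‖² + 1` for `x = a, b`. The first two give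
`⟪β a + α b, c⟫ = 0`, so `m` and `u` are both orthogonal to `c ≠ 0` in the plane, and `m` is a
real multiple of `u`. The last one describes the circle through `a` and `b` orthogonal to the
unit circle, and expanding it at `m` with the relation for `‖a - b‖²` shows that `m` is on it.
-/

open Module RealInnerProductSpace

section InnerProductSpace

variable {E : Type*} [NormedAddCommGroup E] [InnerProductSpace ℝ E]

theorem smul_mem_segment_neg_self {t : ℝ} (ht : |t| ≤ 1) (u : E) : t • u ∈ segment ℝ (-u) u := by
  obtain ⟨h₁, h₂⟩ := abs_le.1 ht
  refine ⟨(1 - t) / 2, (1 + t) / 2, by linarith, by linarith, by ring, ?_⟩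
  rw [smul_neg, ← sub_eq_neg_add, ← sub_smul]
  ring_nf

theorem exists_smul_eq_of_inner_eq_zero [Fact (finrank ℝ E = 2)] {c x y : E} (hc : c ≠ 0)
    (hy : y ≠ 0) (hxc : ⟪x, c⟫ = 0) (hyc : ⟪y, c⟫ = 0) : ∃ t : ℝ, t • y = x := by
  have hx' : x ∈ (ℝ ∙ c)ᗮ := Submodule.mem_orthogonal_singleton_iff_inner_left.2 hxc
  have hy' : y ∈ (ℝ ∙ c)ᗮ := Submodule.mem_orthogonal_singleton_iff_inner_left.2 hyc
  obtain ⟨t, ht⟩ := (finrank_eq_one_iff_of_nonzero' (⟨y, hy'⟩ : (ℝ ∙ c)ᗮ) (by simpa)).1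
    (Submodule.finrank_orthogonal_span_singleton hc) ⟨x, hx'⟩
  exact ⟨t, congrArg Subtype.val ht⟩

theorem norm_sub_eq_norm_sub_iff {x y c : E} :
    ‖x - c‖ = ‖y - c‖ ↔ ‖x‖ ^ 2 - 2 * ⟪x, c⟫ = ‖y‖ ^ 2 - 2 * ⟪y, c⟫ := by
  rw [← sq_eq_sq₀ (norm_nonneg _) (norm_nonneg _), norm_sub_sq_real, norm_sub_sq_real]
  constructor <;> intro h <;> linarith

theorem midpoint_smul_eq {a b m : E} {s : ℝ}
    (ham : ‖a - m‖ ^ 2 = s * ((1 - ‖a‖ ^ 2) * (1 - ‖m‖ ^ 2)))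
    (hmb : ‖m - b‖ ^ 2 = s * ((1 - ‖m‖ ^ 2) * (1 - ‖b‖ ^ 2)))
    (hab : ‖a - b‖ ^ 2 = 4 * s * (1 + s) * ((1 - ‖a‖ ^ 2) * (1 - ‖b‖ ^ 2))) :
    (1 - ‖a‖ ^ 2 + (1 - ‖b‖ ^ 2) + 2 * s * (1 - ‖a‖ ^ 2) * (1 - ‖b‖ ^ 2)) • m =
      (1 - ‖b‖ ^ 2) • a + (1 - ‖a‖ ^ 2) • b := by
  rw [← sub_eq_zero, ← norm_eq_zero, ← sq_eq_zero_iff, ← real_inner_self_eq_norm_sq]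
  rw [norm_sub_sq_real] at ham hmb hab
  simp only [inner_sub_left, inner_sub_right, inner_add_left, inner_add_right,
    real_inner_smul_left, real_inner_smul_right, real_inner_self_eq_norm_sq, real_inner_comm a m,
    real_inner_comm m b, real_inner_comm a b, norm_smul, mul_pow, Real.norm_eq_abs, sq_abs]
  linear_combination (1 - ‖a‖ ^ 2 + (1 - ‖b‖ ^ 2) + 2 * s * (1 - ‖a‖ ^ 2) * (1 - ‖b‖ ^ 2)) *
    ((1 - ‖b‖ ^ 2) * ham + (1 - ‖a‖ ^ 2) * hmb) - (1 - ‖a‖ ^ 2) * (1 - ‖b‖ ^ 2) * hab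

theorem inner_eq_zero_of_midpoint_smul_eq {a b m c : E} {S : ℝ} (hS : S ≠ 0)
    (hm : S • m = (1 - ‖b‖ ^ 2) • a + (1 - ‖a‖ ^ 2) • b)
    (hac : 2 * ⟪a, c⟫ = ‖a‖ ^ 2 - 1) (hbc : 2 * ⟪b, c⟫ = 1 - ‖b‖ ^ 2) : ⟪m, c⟫ = 0 := by
  have h := congrArg (⟪·, c⟫) hm
  simp only [inner_add_left, real_inner_smul_left] at h
  refine (mul_eq_zero.1 ?_).resolve_left hS
  linear_combination h + (1 - ‖b‖ ^ 2) / 2 * hac + (1 - ‖a‖ ^ 2) / 2 * hbc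

theorem inner_eq_of_midpoint_smul_eq {a b m v : E} {s : ℝ}
    (hS : 1 - ‖a‖ ^ 2 + (1 - ‖b‖ ^ 2) + 2 * s * (1 - ‖a‖ ^ 2) * (1 - ‖b‖ ^ 2) ≠ 0)
    (hm : (1 - ‖a‖ ^ 2 + (1 - ‖b‖ ^ 2) + 2 * s * (1 - ‖a‖ ^ 2) * (1 - ‖b‖ ^ 2)) • m =
      (1 - ‖b‖ ^ 2) • a + (1 - ‖a‖ ^ 2) • b)
    (hab : ‖a - b‖ ^ 2 = 4 * s * (1 + s) * ((1 - ‖a‖ ^ 2) * (1 - ‖b‖ ^ 2)))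
    (hav : 2 * ⟪a, v⟫ = ‖a‖ ^ 2 + 1) (hbv : 2 * ⟪b, v⟫ = ‖b‖ ^ 2 + 1) :
    2 * ⟪m, v⟫ = ‖m‖ ^ 2 + 1 := by
  set S := 1 - ‖a‖ ^ 2 + (1 - ‖b‖ ^ 2) + 2 * s * (1 - ‖a‖ ^ 2) * (1 - ‖b‖ ^ 2)
  have hmv := congrArg (⟪·, v⟫) hm
  have hmm := congrArg (fun x ↦ ⟪x, x⟫) hm
  rw [norm_sub_sq_real] at hab
  simp only [inner_add_left, inner_add_right, real_inner_smul_left, real_inner_smul_right,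
    real_inner_self_eq_norm_sq, real_inner_comm a b, norm_smul, mul_pow, Real.norm_eq_abs,
    sq_abs] at hmv hmm
  have key : S ^ 2 * (2 * ⟪m, v⟫ - (‖m‖ ^ 2 + 1)) = 0 := by
    linear_combination 2 * S * hmv - hmm + S * (1 - ‖b‖ ^ 2) * hav + S * (1 - ‖a‖ ^ 2) * hbv
      + (1 - ‖a‖ ^ 2) * (1 - ‖b‖ ^ 2) * hab
  linarith [(mul_eq_zero.1 key).resolve_left (pow_ne_zero 2 hS)]

end InnerProductSpace

theorem sq_norm_mul_sq_norm_sub_inv_conj (p : ℂ) {x : ℂ} (hx : x ≠ 0) :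
    ‖x‖ ^ 2 * ‖p - (conj x)⁻¹‖ ^ 2 = ‖x‖ ^ 2 * ‖p‖ ^ 2 - 2 * ⟪x, p⟫ + 1 := by
  have hx' : conj x ≠ 0 := (map_ne_zero conj).2 hx
  calc ‖x‖ ^ 2 * ‖p - (conj x)⁻¹‖ ^ 2 = ‖p * conj x - 1‖ ^ 2 := by
        rw [← mul_pow, ← Complex.norm_conj x, ← norm_mul, mul_sub, mul_inv_cancel₀ hx', mul_comm]
    _ = ‖x‖ ^ 2 * ‖p‖ ^ 2 - 2 * ⟪x, p⟫ + 1 := by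
        rw [norm_sub_sq_real, norm_mul, Complex.norm_conj, Complex.inner, Complex.inner, one_mul,
          Complex.conj_re, norm_one, one_pow, mul_pow, mul_comm]

theorem inner_eq_of_norm_sub_eq_norm_add_inv_conj {p x : ℂ} (hx : x ≠ 0)
    (h : ‖p - x‖ = ‖p + (conj x)⁻¹‖) : 2 * ⟪x, p⟫ = ‖x‖ ^ 2 - 1 := by
  have hinv := sq_norm_mul_sq_norm_sub_inv_conj p (neg_ne_zero.2 hx)
  rw [map_neg, inv_neg, sub_neg_eq_add, ← h, norm_sub_sq_real, norm_neg, inner_neg_left,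
    real_inner_comm x p] at hinv
  have key : (‖x‖ ^ 2 + 1) * (2 * ⟪x, p⟫ - (‖x‖ ^ 2 - 1)) = 0 := by
    linear_combination -hinv
  linarith [(mul_eq_zero.1 key).resolve_left (by positivity)]

theorem inner_eq_of_norm_sub_eq_norm_sub_inv_conj {p x : ℂ} (hx : x ≠ 0) (hx1 : ‖x‖ ≠ 1)
    (h : ‖p - x‖ = ‖p - (conj x)⁻¹‖) : 2 * ⟪x, p⟫ = ‖x‖ ^ 2 + 1 := by
  have hinv := sq_norm_mul_sq_norm_sub_inv_conj p hx
  rw [← h, norm_sub_sq_real, real_inner_comm x p] at hinv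
  have key : (‖x‖ ^ 2 - 1) * (2 * ⟪x, p⟫ - (‖x‖ ^ 2 + 1)) = 0 := by
    linear_combination -hinv
  have hx1' : ‖x‖ ^ 2 - 1 ≠ 0 := by
    rwa [sub_ne_zero, Ne, pow_eq_one_iff_of_nonneg (norm_nonneg x) two_ne_zero]
  linarith [(mul_eq_zero.1 key).resolve_left hx1']

theorem sinh_half_rho_sq_mul {x y : ℂ} (hx : ‖x‖ < 1) (hy : ‖y‖ < 1) :
    Real.sinh (rho x y / 2) ^ 2 * ((1 - ‖x‖ ^ 2) * (1 - ‖y‖ ^ 2)) = ‖x - y‖ ^ 2 := by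
  have hpos : 0 < (1 - ‖x‖ ^ 2) * (1 - ‖y‖ ^ 2) :=
    mul_pos (by nlinarith [norm_nonneg x]) (by nlinarith [norm_nonneg y])
  rw [rho, mul_div_cancel_left₀ _ two_ne_zero, Real.sinh_arsinh, div_pow, Real.sq_sqrt hpos.le,
    div_mul_cancel₀ _ hpos.ne']

theorem norm_sub_sq_eq_of_rho_eq_half {a b m : ℂ} (ha : ‖a‖ < 1) (hb : ‖b‖ < 1) (hm : ‖m‖ < 1)
    (hm1 : rho a m = rho a b / 2) (hm2 : rho m b = rho a b / 2) :
    ‖a - m‖ ^ 2 = Real.sinh (rho a b / 4) ^ 2 * ((1 - ‖a‖ ^ 2) * (1 - ‖m‖ ^ 2)) ∧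
    ‖m - b‖ ^ 2 = Real.sinh (rho a b / 4) ^ 2 * ((1 - ‖m‖ ^ 2) * (1 - ‖b‖ ^ 2)) ∧
    ‖a - b‖ ^ 2 = 4 * Real.sinh (rho a b / 4) ^ 2 * (1 + Real.sinh (rho a b / 4) ^ 2) *
      ((1 - ‖a‖ ^ 2) * (1 - ‖b‖ ^ 2)) := by
  have hquarter : rho a b / 4 = rho a b / 2 / 2 := by ring
  refine ⟨?_, ?_, ?_⟩
  · rw [← sinh_half_rho_sq_mul ha hm, hm1, hquarter]
  · rw [← sinh_half_rho_sq_mul hm hb, hm2, hquarter]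
  · rw [← sinh_half_rho_sq_mul ha hb, show rho a b / 2 = 2 * (rho a b / 4) by ring,
      Real.sinh_two_mul, mul_pow, mul_pow, Real.cosh_sq]
    ring

theorem stmt12_general (a b : ℂ) (ha : ‖a‖ < 1) (hb : ‖b‖ < 1)
    (ha0 : a ≠ 0) (hb0 : b ≠ 0)
    (c : ℂ)
    (hc1 : ‖c - a‖ = ‖c + 1 / conj a‖)
    (hc2 : ‖c - a‖ = ‖c - 1 / conj b‖)
    (u : ℂ) (hu1 : ‖u‖ = 1) (hu2 : ‖u - c‖ = ‖a - c‖)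
    (v : ℂ)
    (hv1 : ‖v - a‖ = ‖v - b‖)
    (hv2 : ‖v - a‖ = ‖v - 1 / conj a‖)
    (m : ℂ) (hm : ‖m‖ < 1)
    (hm1 : rho a m = rho a b / 2) (hm2 : rho m b = rho a b / 2) :
    m ∈ segment ℝ (-u) u ∧ ‖m - v‖ = ‖a - v‖ := by
  have : Fact (finrank ℝ ℂ = 2) := Complex.finrank_real_complex_fact
  rw [one_div] at hc1 hc2 hv2
  obtain ⟨ham, hmb, hab⟩ := norm_sub_sq_eq_of_rho_eq_half ha hb hm hm1 hm2
  set s := Real.sinh (rho a b / 4) ^ 2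
  have hα : 0 < 1 - ‖a‖ ^ 2 := by nlinarith [norm_nonneg a]
  have hβ : 0 < 1 - ‖b‖ ^ 2 := by nlinarith [norm_nonneg b]
  have hS : 1 - ‖a‖ ^ 2 + (1 - ‖b‖ ^ 2) + 2 * s * (1 - ‖a‖ ^ 2) * (1 - ‖b‖ ^ 2) ≠ 0 := by
    have : 0 ≤ 2 * s * (1 - ‖a‖ ^ 2) * (1 - ‖b‖ ^ 2) :=
      mul_nonneg (mul_nonneg (by positivity) hα.le) hβ.le
    linarith
  have hmid := midpoint_smul_eq ham hmb hab
  have hac := inner_eq_of_norm_sub_eq_norm_add_inv_conj ha0 hc1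
  have hbc : 2 * ⟪b, c⟫ = 1 - ‖b‖ ^ 2 := by
    have h := sq_norm_mul_sq_norm_sub_inv_conj c hb0
    rw [← hc2, norm_sub_sq_real, real_inner_comm a c] at h
    linear_combination h + ‖b‖ ^ 2 * hac
  have huc : ⟪u, c⟫ = 0 := by
    have h := norm_sub_eq_norm_sub_iff.1 hu2
    rw [hu1] at h
    linarith
  have hav := inner_eq_of_norm_sub_eq_norm_sub_inv_conj ha0 ha.ne hv2
  have hbv : 2 * ⟪b, v⟫ = ‖b‖ ^ 2 + 1 := by
    rw [norm_sub_rev, norm_sub_rev v, norm_sub_eq_norm_sub_iff] at hv1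
    linarith
  refine ⟨?_, ?_⟩
  · have hc : c ≠ 0 := by
      rintro rfl
      rw [inner_zero_right, mul_zero] at hac
      linarith
    obtain ⟨t, rfl⟩ := exists_smul_eq_of_inner_eq_zero hc (by rintro rfl; simp at hu1)
      (inner_eq_zero_of_midpoint_smul_eq hS hmid hac hbc) huc
    rw [norm_smul, hu1, mul_one, Real.norm_eq_abs] at hm
    exact smul_mem_segment_neg_self hm.le u
  · rw [norm_sub_eq_norm_sub_iff]
    linarith [inner_eq_of_midpoint_smul_eq hS hmid hab hav hbv]

theorem stmt12 (a b : ℂ) (ha : ‖a‖ < 1) (hb : ‖b‖ < 1)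
    (ha0 : a ≠ 0) (hb0 : b ≠ 0)
    (hnc : a * conj b ∉ Set.range (Complex.ofReal))
    (c : ℂ)
    (hc1 : ‖c - a‖ = ‖c + 1 / conj a‖)
    (hc2 : ‖c - a‖ = ‖c - 1 / conj b‖)
    (u : ℂ) (hu1 : ‖u‖ = 1) (hu2 : ‖u - c‖ = ‖a - c‖)
    (v : ℂ)
    (hv1 : ‖v - a‖ = ‖v - b‖)
    (hv2 : ‖v - a‖ = ‖v - 1 / conj a‖)
    (m : ℂ) (hm : ‖m‖ < 1)
    (hm1 : rho a m = rho a b / 2) (hm2 : rho m b = rho a b / 2) :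
    m ∈ segment ℝ (-u) u ∧ ‖m - v‖ = ‖a - v‖ :=
  stmt12_general a b ha hb ha0 hb0 c hc1 hc2 u hu1 hu2 v hv1 hv2 m hm hm1 hm2
end

section
/- Let a,b ∈ 𝔹²∖{0} with a·conj(b) ∉ ℝ and |a| ≠ |b|, let a_*, b_* be the endpoints on the unit circle of the hyperbolic line through a and b, and set c = LIS[a,b,a_*,b_*]. Then |c| > 1, and the hyperbolic midpoint m of a and b satisfies |m − c|² = |c|² − 1; that is, m lies on the circle centered at c that is orthogonal to the unit circle. -/
open ComplexConjugate


/-- The endpoint, near `a`, on the unit circle of the hyperbolic line through `a` and `b`;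
so `endpt a b = a_*` and `endpt b a = b_*`. -/
noncomputable def endpt (a b : ℂ) : ℂ :=
  (b * (1 - a * conj b) * (‖a - b‖ : ℂ) +
      (a - b) * (‖1 - a * conj b‖ : ℂ)) /
    ((1 - a * conj b) * (‖a - b‖ : ℂ) +
      conj b * (a - b) * (‖1 - a * conj b‖ : ℂ))

/-! `b ⊕ z = (b + z) / (1 + b̄ z)` is the automorphism of the disk taking `0` to `b`. The endpoints
are `a_* = b ⊕ u` and `b_* = b ⊕ (-u)`, where `u` is the unit vector along `(-b) ⊕ a`. For points of
the unit circle the chord through `a_*, b_*` is `{p | p + a_* b_* p̄ = a_* + b_*}`; in terms of `u`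
this reads `K = u² K̄` with `K = p + b² p̄ - 2b`, i.e. `K · conj ((-b) ⊕ a)` is real. That is a
short computation for `c = (a (1 - |b|²) - b (1 - |a|²)) / (|a|² - |b|²)`, the point of the line
`ab` with `c - a : c - b = (1 - |a|²) : (1 - |b|²)`, and the two lines are not parallel because
`Im (a b̄) (|a|² - |b|²) (1 - |b|²) ≠ 0`. Hence `c = LIS[a, b, a_*, b_*]`, and then

* `|c|² - 1 = |a - b|² (1 - |a|²) (1 - |b|²) / (|a|² - |b|²)² > 0`;
* `(|a|² - |b|²) (|m - c|² - |c|² + 1) = |a - m|² (1 - |b|²) - |m - b|² (1 - |a|²)`, and the right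
  side vanishes exactly when `ρ(a, m) = ρ(m, b)`.
-/

/-- For `a ≠ b`, the point `p` lies on the line through `a` and `b` iff `lineForm a b p = 0`. -/
def lineForm (a b p : ℂ) : ℂ :=
  p * (conj a - conj b) - conj p * (a - b) - (conj a * b - a * conj b)

def lineDet (a b c d : ℂ) : ℂ :=
  (conj a - conj b) * (c - d) - (conj c - conj d) * (a - b)

theorem LIS_eq_of_lineForm_eq_zero {a b c d p : ℂ} (hab : lineForm a b p = 0)
    (hcd : lineForm c d p = 0) (hD : lineDet a b c d ≠ 0) : LIS a b c d = p := by
  unfold lineDet at hD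
  unfold lineForm at hab hcd
  rw [LIS, div_eq_iff hD]
  linear_combination (a - b) * hcd - (c - d) * hab

section UnitCircle

variable {x y : ℂ}

theorem lineForm_mul_of_norm_eq_one (p : ℂ) (hx : ‖x‖ = 1) (hy : ‖y‖ = 1) :
    lineForm x y p * (x * y) = (y - x) * (p + x * y * conj p - (x + y)) := by
  have hx0 : x ≠ 0 := norm_ne_zero_iff.1 (by simp [hx])
  have hy0 : y ≠ 0 := norm_ne_zero_iff.1 (by simp [hy])
  rw [lineForm, ← Complex.inv_eq_conj hx, ← Complex.inv_eq_conj hy]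
  field_simp
  ring

theorem lineDet_mul_of_norm_eq_one (a b : ℂ) (hx : ‖x‖ = 1) (hy : ‖y‖ = 1) :
    lineDet a b x y * (x * y) = (x - y) * (x * y * conj (a - b) + (a - b)) := by
  have hx0 : x ≠ 0 := norm_ne_zero_iff.1 (by simp [hx])
  have hy0 : y ≠ 0 := norm_ne_zero_iff.1 (by simp [hy])
  rw [lineDet, ← Complex.inv_eq_conj hx, ← Complex.inv_eq_conj hy, map_sub]
  field_simp
  ring

end UnitCircle

noncomputable def mobiusAdd (b z : ℂ) : ℂ := (b + z) / (1 + conj b * z)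

section MobiusAdd

variable {b u : ℂ}

theorem one_sub_conj_mul_ne_zero (hu : ‖u‖ ≤ 1) (hb : ‖b‖ < 1) : 1 - conj b * u ≠ 0 := by
  intro h
  have : ‖conj b * u‖ = 1 := by rw [← sub_eq_zero.1 h, norm_one]
  rw [norm_mul, Complex.norm_conj] at this
  nlinarith [norm_nonneg u, norm_nonneg b]

theorem one_add_conj_mul_ne_zero (hu : ‖u‖ ≤ 1) (hb : ‖b‖ < 1) : 1 + conj b * u ≠ 0 := by
  simpa [sub_eq_add_neg] using one_sub_conj_mul_ne_zero (u := -u) (by rwa [norm_neg]) hb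

theorem one_sub_conj_sq_mul_sq_ne_zero (hu : ‖u‖ = 1) (hb : ‖b‖ < 1) :
    1 - conj b ^ 2 * u ^ 2 ≠ 0 := by
  convert mul_ne_zero (one_add_conj_mul_ne_zero hu.le hb) (one_sub_conj_mul_ne_zero hu.le hb)
    using 1
  ring

theorem norm_mobiusAdd (hu : ‖u‖ = 1) (hb : ‖b‖ < 1) : ‖mobiusAdd b u‖ = 1 := by
  have hden : 1 + conj b * u = u * conj (b + u) := by
    rw [map_add, mul_add, Complex.mul_conj', hu]; push_cast; ring
  have hbu : b + u ≠ 0 := by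
    intro h
    rw [eq_neg_of_add_eq_zero_left h, norm_neg] at hb
    exact hb.ne hu
  rw [mobiusAdd, hden, norm_div, norm_mul, Complex.norm_conj, hu, one_mul,
    div_self (norm_ne_zero_iff.2 hbu)]

theorem mobiusAdd_sub_mobiusAdd_neg (hu : ‖u‖ = 1) (hb : ‖b‖ < 1) :
    (1 - conj b ^ 2 * u ^ 2) * (mobiusAdd b u - mobiusAdd b (-u)) = 2 * u * (1 - b * conj b) := by
  have h₁ := one_add_conj_mul_ne_zero hu.le hb
  have h₂ := one_sub_conj_mul_ne_zero hu.le hb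
  rw [mobiusAdd, mobiusAdd, mul_neg, ← sub_eq_add_neg, ← sub_eq_add_neg]
  field_simp
  ring

theorem mobiusAdd_add_mobiusAdd_neg (hu : ‖u‖ = 1) (hb : ‖b‖ < 1) :
    (1 - conj b ^ 2 * u ^ 2) * (mobiusAdd b u + mobiusAdd b (-u)) = 2 * (b - conj b * u ^ 2) := by
  have h₁ := one_add_conj_mul_ne_zero hu.le hb
  have h₂ := one_sub_conj_mul_ne_zero hu.le hb
  rw [mobiusAdd, mobiusAdd, mul_neg, ← sub_eq_add_neg, ← sub_eq_add_neg]
  field_simp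
  ring

theorem mobiusAdd_mul_mobiusAdd_neg (hu : ‖u‖ = 1) (hb : ‖b‖ < 1) :
    (1 - conj b ^ 2 * u ^ 2) * (mobiusAdd b u * mobiusAdd b (-u)) = b ^ 2 - u ^ 2 := by
  have h₁ := one_add_conj_mul_ne_zero hu.le hb
  have h₂ := one_sub_conj_mul_ne_zero hu.le hb
  rw [mobiusAdd, mobiusAdd, mul_neg, ← sub_eq_add_neg, ← sub_eq_add_neg]
  field_simp
  ring

theorem one_sub_mul_conj_self_ne_zero (hb : ‖b‖ < 1) : 1 - b * conj b ≠ 0 := by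
  rw [Complex.mul_conj', sub_ne_zero]
  exact_mod_cast (by nlinarith [norm_nonneg b] : (1 : ℝ) ≠ ‖b‖ ^ 2)

theorem lineForm_mobiusAdd_eq_zero (p : ℂ) (hu : ‖u‖ = 1) (hb : ‖b‖ < 1)
    (h : u ^ 2 * conj (p + b ^ 2 * conj p - 2 * b) = p + b ^ 2 * conj p - 2 * b) :
    lineForm (mobiusAdd b u) (mobiusAdd b (-u)) p = 0 := by
  have hx := norm_mobiusAdd hu hb
  have hy := norm_mobiusAdd (u := -u) (by rwa [norm_neg]) hb
  have hchord :
      p + mobiusAdd b u * mobiusAdd b (-u) * conj p - (mobiusAdd b u + mobiusAdd b (-u)) = 0 := by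
    apply mul_left_cancel₀ (one_sub_conj_sq_mul_sq_ne_zero hu hb)
    simp only [map_add, map_sub, map_mul, map_pow, Complex.conj_conj, map_ofNat] at h
    linear_combination
      conj p * mobiusAdd_mul_mobiusAdd_neg hu hb - mobiusAdd_add_mobiusAdd_neg hu hb - h
  have := lineForm_mul_of_norm_eq_one p hx hy
  rw [hchord, mul_zero] at this
  exact (mul_eq_zero.1 this).resolve_right
    (mul_ne_zero (norm_ne_zero_iff.1 (by simp [hx])) (norm_ne_zero_iff.1 (by simp [hy])))

theorem lineDet_mobiusAdd_ne_zero (p q : ℂ) (hu : ‖u‖ = 1) (hb : ‖b‖ < 1)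
    (h : u ^ 2 * conj (p - q + b ^ 2 * conj (p - q)) ≠ p - q + b ^ 2 * conj (p - q)) :
    lineDet p q (mobiusAdd b u) (mobiusAdd b (-u)) ≠ 0 := by
  have hx := norm_mobiusAdd hu hb
  have hy := norm_mobiusAdd (u := -u) (by rwa [norm_neg]) hb
  intro hD
  have := lineDet_mul_of_norm_eq_one p q hx hy
  rw [hD, zero_mul, eq_comm, mul_eq_zero] at this
  rcases this with hxy | hparallel
  · have := mobiusAdd_sub_mobiusAdd_neg hu hb
    rw [hxy, mul_zero, eq_comm] at this
    exact mul_ne_zero (mul_ne_zero two_ne_zero (norm_ne_zero_iff.1 (by simp [hu])))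
      (one_sub_mul_conj_self_ne_zero hb) this
  · apply h
    simp only [map_add, map_sub, map_mul, map_pow, Complex.conj_conj] at hparallel ⊢
    linear_combination (conj p - conj q) * mobiusAdd_mul_mobiusAdd_neg hu hb -
      (1 - conj b ^ 2 * u ^ 2) * hparallel

end MobiusAdd

theorem sq_div_norm_mul_conj_eq_iff {w : ℂ} (J : ℂ) (hw : w ≠ 0) :
    (w / ‖w‖) ^ 2 * conj J = J ↔ conj w * J = w * conj J := by
  have hw' : conj w ≠ 0 := (map_ne_zero _).2 hw
  have : (w / ‖w‖) ^ 2 = w / conj w := by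
    rw [div_pow, ← Complex.mul_conj', pow_two, mul_div_mul_left _ _ hw]
  rw [this, div_mul_eq_mul_div, div_eq_iff hw', eq_comm, mul_comm J]

/-- `(-b) ⊕ ·` has positive real derivative at `b`, so this is the unit tangent vector at `b` of
the geodesic from `b` towards `a`. -/
noncomputable def geodesicDir (b a : ℂ) : ℂ := mobiusAdd (-b) a / ‖mobiusAdd (-b) a‖

section GeodesicDir

variable {a b : ℂ}

theorem mobiusAdd_neg_eq : mobiusAdd (-b) a = (a - b) / (1 - conj b * a) := by
  rw [mobiusAdd, map_neg, neg_mul, ← sub_eq_add_neg, neg_add_eq_sub]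

theorem mobiusAdd_neg_ne_zero (ha : ‖a‖ < 1) (hb : ‖b‖ < 1) (hab : a ≠ b) :
    mobiusAdd (-b) a ≠ 0 := by
  rw [mobiusAdd_neg_eq]
  exact div_ne_zero (sub_ne_zero.2 hab) (one_sub_conj_mul_ne_zero ha.le hb)

theorem norm_geodesicDir (ha : ‖a‖ < 1) (hb : ‖b‖ < 1) (hab : a ≠ b) :
    ‖geodesicDir b a‖ = 1 := by
  rw [geodesicDir, norm_div, Complex.norm_real, norm_norm,
    div_self (norm_ne_zero_iff.2 (mobiusAdd_neg_ne_zero ha hb hab))]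

theorem geodesicDir_mul (ha : ‖a‖ < 1) (hb : ‖b‖ < 1) (hab : a ≠ b) :
    geodesicDir b a * ((1 - a * conj b) * ‖a - b‖) = (a - b) * ‖1 - a * conj b‖ := by
  have h₁ : 1 - a * conj b ≠ 0 := by rw [mul_comm]; exact one_sub_conj_mul_ne_zero ha.le hb
  have h₂ : (‖a - b‖ : ℂ) ≠ 0 := by exact_mod_cast norm_ne_zero_iff.2 (sub_ne_zero.2 hab)
  have h₃ : (‖1 - a * conj b‖ : ℂ) ≠ 0 := by exact_mod_cast norm_ne_zero_iff.2 h₁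
  rw [geodesicDir, mobiusAdd_neg_eq, norm_div, mul_comm (conj b)]
  push_cast
  field_simp

theorem endpt_eq_mobiusAdd (ha : ‖a‖ < 1) (hb : ‖b‖ < 1) (hab : a ≠ b) :
    endpt a b = mobiusAdd b (geodesicDir b a) := by
  have h₁ : 1 - a * conj b ≠ 0 := by rw [mul_comm]; exact one_sub_conj_mul_ne_zero ha.le hb
  have h₂ : (‖a - b‖ : ℂ) ≠ 0 := by exact_mod_cast norm_ne_zero_iff.2 (sub_ne_zero.2 hab)
  have hu := geodesicDir_mul ha hb hab
  rw [mobiusAdd, ← mul_div_mul_right _ _ (mul_ne_zero h₁ h₂), endpt]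
  congr 1
  · linear_combination -hu
  · linear_combination -conj b * hu

theorem mobiusAdd_geodesicDir_swap (ha : ‖a‖ < 1) (hb : ‖b‖ < 1) (hab : a ≠ b) :
    mobiusAdd a (geodesicDir a b) = mobiusAdd b (-geodesicDir b a) := by
  have hu := geodesicDir_mul ha hb hab
  have hv := geodesicDir_mul hb ha hab.symm
  set r : ℂ := ((‖a - b‖ : ℝ) : ℂ) with hr
  set s : ℂ := ((‖1 - a * conj b‖ : ℝ) : ℂ) with hs
  have hr' : (‖b - a‖ : ℂ) = r := by rw [norm_sub_rev]
  have hs' : (‖1 - b * conj a‖ : ℂ) = s := by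
    rw [hs, ← Complex.norm_conj (1 - a * conj b)]; simp [mul_comm]
  rw [hr', hs'] at hv
  have hR : r ^ 2 = (a - b) * conj (a - b) := by rw [Complex.mul_conj']
  have hS : s ^ 2 = (1 - a * conj b) * conj (1 - a * conj b) := by rw [Complex.mul_conj']
  simp only [map_sub, map_one, map_mul, Complex.conj_conj] at hR hS
  have hr0 : r ≠ 0 := by
    rw [hr]; exact_mod_cast norm_ne_zero_iff.2 (sub_ne_zero.2 hab)
  have hP : (1 - a * conj b) * (1 - conj a * b) ≠ 0 :=
    mul_ne_zero (by rw [mul_comm]; exact one_sub_conj_mul_ne_zero ha.le hb)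
      (one_sub_conj_mul_ne_zero hb.le ha)
  have h₁ := one_add_conj_mul_ne_zero (norm_geodesicDir hb ha hab.symm).le ha
  have h₂ := one_add_conj_mul_ne_zero (u := -geodesicDir b a)
    (by rw [norm_neg, norm_geodesicDir ha hb hab]) hb
  set u := geodesicDir b a
  set v := geodesicDir a b
  have huv : u * v * r ^ 2 = -(a - b) ^ 2 := by
    apply mul_right_cancel₀ hP
    linear_combination (v * (1 - b * conj a) * r) * hu + (a - b) * s * hv - (a - b) ^ 2 * hS
  rw [mobiusAdd, mobiusAdd, div_eq_div_iff h₁ h₂]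
  apply mul_right_cancel₀ (pow_ne_zero 2 hr0)
  linear_combination r * hv + r * hu - (conj b - conj a) * huv + (a - b) * hR

end GeodesicDir

/-- The center of the circle, orthogonal to the unit circle, that carries the hyperbolic
perpendicular bisector of `a` and `b`. -/
noncomputable def bisectorCenter (a b : ℂ) : ℂ :=
  (a * (1 - b * conj b) - b * (1 - a * conj a)) / (a * conj a - b * conj b)

section BisectorCenter

variable {a b : ℂ}

theorem mul_conj_sub_mul_conj_ne_zero (h : ‖a‖ ≠ ‖b‖) : a * conj a - b * conj b ≠ 0 := by
  rw [Complex.mul_conj', Complex.mul_conj', sub_ne_zero]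
  exact_mod_cast fun h' => h ((sq_eq_sq₀ (norm_nonneg a) (norm_nonneg b)).1 h')

theorem lineForm_bisectorCenter (h : ‖a‖ ≠ ‖b‖) : lineForm a b (bisectorCenter a b) = 0 := by
  have hΔ := mul_conj_sub_mul_conj_ne_zero h
  have hΔ' : conj a * a - conj b * b ≠ 0 := by rwa [mul_comm, mul_comm (conj b)]
  simp only [lineForm, bisectorCenter, map_div₀, map_sub, map_mul, map_one, Complex.conj_conj]
  field_simp
  ring

theorem sq_geodesicDir_mul_conj_bisectorCenter (ha : ‖a‖ < 1) (hb : ‖b‖ < 1) (hab : a ≠ b)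
    (h : ‖a‖ ≠ ‖b‖) :
    geodesicDir b a ^ 2 * conj (bisectorCenter a b + b ^ 2 * conj (bisectorCenter a b) - 2 * b) =
      bisectorCenter a b + b ^ 2 * conj (bisectorCenter a b) - 2 * b := by
  refine (sq_div_norm_mul_conj_eq_iff _ (mobiusAdd_neg_ne_zero ha hb hab)).2 ?_
  have h₁ := one_sub_conj_mul_ne_zero ha.le hb
  have h₂ := one_sub_conj_mul_ne_zero hb.le ha
  have hΔ := mul_conj_sub_mul_conj_ne_zero h
  have hΔ' : conj a * a - conj b * b ≠ 0 := by rwa [mul_comm, mul_comm (conj b)]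
  rw [mobiusAdd_neg_eq, bisectorCenter]
  simp only [map_div₀, map_add, map_sub, map_mul, map_one, map_pow, map_ofNat, Complex.conj_conj]
  field_simp
  ring

theorem sq_geodesicDir_mul_conj_ne (ha : ‖a‖ < 1) (hb : ‖b‖ < 1)
    (hab : a * conj b - conj a * b ≠ 0) (h : ‖a‖ ≠ ‖b‖) :
    geodesicDir b a ^ 2 * conj (a - b + b ^ 2 * conj (a - b)) ≠ a - b + b ^ 2 * conj (a - b) := by
  have hne : a ≠ b := by rintro rfl; exact hab (by ring)
  rw [Ne, geodesicDir, sq_div_norm_mul_conj_eq_iff _ (mobiusAdd_neg_ne_zero ha hb hne),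
    mobiusAdd_neg_eq]
  have h₁ := one_sub_conj_mul_ne_zero ha.le hb
  have h₂ : 1 - b * conj a ≠ 0 := by rw [mul_comm]; exact one_sub_conj_mul_ne_zero hb.le ha
  simp only [map_div₀, map_add, map_sub, map_mul, map_one, map_pow, Complex.conj_conj]
  rw [div_mul_eq_mul_div, div_mul_eq_mul_div, div_eq_div_iff h₂ h₁]
  intro heq
  have : (a * conj b - conj a * b) * (a * conj a - b * conj b) * (1 - b * conj b) = 0 := by
    linear_combination -heq
  exact mul_ne_zero (mul_ne_zero hab (mul_conj_sub_mul_conj_ne_zero h))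
    (one_sub_mul_conj_self_ne_zero hb) this

theorem LIS_endpt_eq_bisectorCenter (ha : ‖a‖ < 1) (hb : ‖b‖ < 1)
    (hab : a * conj b - conj a * b ≠ 0) (h : ‖a‖ ≠ ‖b‖) :
    LIS a b (endpt a b) (endpt b a) = bisectorCenter a b := by
  have hne : a ≠ b := by rintro rfl; exact hab (by ring)
  have hu := norm_geodesicDir ha hb hne
  rw [endpt_eq_mobiusAdd ha hb hne, endpt_eq_mobiusAdd hb ha hne.symm,
    mobiusAdd_geodesicDir_swap ha hb hne]
  exact LIS_eq_of_lineForm_eq_zero (lineForm_bisectorCenter h)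
    (lineForm_mobiusAdd_eq_zero _ hu hb (sq_geodesicDir_mul_conj_bisectorCenter ha hb hne h))
    (lineDet_mobiusAdd_ne_zero a b hu hb (sq_geodesicDir_mul_conj_ne ha hb hab h))

theorem norm_bisectorCenter_sq (h : ‖a‖ ≠ ‖b‖) :
    ‖bisectorCenter a b‖ ^ 2 =
      1 + ‖a - b‖ ^ 2 * (1 - ‖a‖ ^ 2) * (1 - ‖b‖ ^ 2) / (‖a‖ ^ 2 - ‖b‖ ^ 2) ^ 2 := by
  have hΔ := mul_conj_sub_mul_conj_ne_zero h
  have hΔ' : conj a * a - conj b * b ≠ 0 := by rwa [mul_comm, mul_comm (conj b)]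
  apply Complex.ofReal_injective
  push_cast
  simp only [← Complex.mul_conj', bisectorCenter, map_div₀, map_sub, map_mul, map_one,
    Complex.conj_conj]
  field_simp
  ring

theorem one_lt_norm_bisectorCenter (ha : ‖a‖ < 1) (hb : ‖b‖ < 1) (hab : a ≠ b)
    (h : ‖a‖ ≠ ‖b‖) : 1 < ‖bisectorCenter a b‖ := by
  have hpos : 0 < ‖a - b‖ ^ 2 * (1 - ‖a‖ ^ 2) * (1 - ‖b‖ ^ 2) / (‖a‖ ^ 2 - ‖b‖ ^ 2) ^ 2 := by
    have : ‖a‖ ^ 2 - ‖b‖ ^ 2 ≠ 0 :=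
      sub_ne_zero.2 fun h' => h ((sq_eq_sq₀ (norm_nonneg a) (norm_nonneg b)).1 h')
    have : 0 < ‖a - b‖ := norm_pos_iff.2 (sub_ne_zero.2 hab)
    have : ‖a‖ ^ 2 < 1 := by nlinarith [norm_nonneg a]
    have : ‖b‖ ^ 2 < 1 := by nlinarith [norm_nonneg b]
    positivity
  nlinarith [norm_bisectorCenter_sq h, norm_nonneg (bisectorCenter a b)]

theorem norm_sub_bisectorCenter_sq {m : ℂ} (h : ‖a‖ ≠ ‖b‖)
    (hm : ‖a - m‖ ^ 2 * (1 - ‖b‖ ^ 2) = ‖m - b‖ ^ 2 * (1 - ‖a‖ ^ 2)) :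
    ‖m - bisectorCenter a b‖ ^ 2 = ‖bisectorCenter a b‖ ^ 2 - 1 := by
  have hΔ := mul_conj_sub_mul_conj_ne_zero h
  have hΔ' : conj a * a - conj b * b ≠ 0 := by rwa [mul_comm, mul_comm (conj b)]
  apply Complex.ofReal_injective
  replace hm := congrArg Complex.ofReal hm
  push_cast at hm ⊢
  simp only [← Complex.mul_conj', bisectorCenter, map_div₀, map_sub, map_mul, map_one,
    Complex.conj_conj] at hm ⊢
  field_simp
  linear_combination (a * conj a - b * conj b) * hm

end BisectorCenter

theorem norm_sub_sq_mul_eq_of_rho_eq {x y m : ℂ} (hx : ‖x‖ < 1) (hy : ‖y‖ < 1) (hm : ‖m‖ < 1)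
    (h : rho x m = rho m y) :
    ‖x - m‖ ^ 2 * (1 - ‖y‖ ^ 2) = ‖m - y‖ ^ 2 * (1 - ‖x‖ ^ 2) := by
  have hx' : 0 < 1 - ‖x‖ ^ 2 := by nlinarith [norm_nonneg x]
  have hy' : 0 < 1 - ‖y‖ ^ 2 := by nlinarith [norm_nonneg y]
  have hm' : 0 < 1 - ‖m‖ ^ 2 := by nlinarith [norm_nonneg m]
  have h' := congrArg (· ^ 2) (Real.arsinh_injective (mul_left_cancel₀ two_ne_zero h))
  simp only [div_pow, Real.sq_sqrt (mul_pos hx' hm').le, Real.sq_sqrt (mul_pos hm' hy').le] at h'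
  rw [div_eq_div_iff (by positivity) (by positivity)] at h'
  apply mul_right_cancel₀ hm'.ne'
  linear_combination h'

theorem stmt13_general (a b : ℂ) (ha : ‖a‖ < 1) (hb : ‖b‖ < 1)
    (hnc : a * conj b ∉ Set.range (Complex.ofReal))
    (habs : ‖a‖ ≠ ‖b‖)
    (c : ℂ) (hc : c = LIS a b (endpt a b) (endpt b a))
    (m : ℂ) (hm : ‖m‖ < 1)
    (hm1 : rho a m = rho a b / 2) (hm2 : rho m b = rho a b / 2) :
    1 < ‖c‖ ∧ ‖m - c‖ ^ 2 = ‖c‖ ^ 2 - 1 := by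
  have hab : a * conj b - conj a * b ≠ 0 := by
    refine sub_ne_zero.2 fun h => hnc ?_
    obtain ⟨r, hr⟩ := Complex.conj_eq_iff_real.1
      (show conj (a * conj b) = a * conj b by rw [map_mul, Complex.conj_conj, h])
    exact ⟨r, hr.symm⟩
  have hne : a ≠ b := by rintro rfl; exact hab (by ring)
  rw [hc, LIS_endpt_eq_bisectorCenter ha hb hab habs]
  exact ⟨one_lt_norm_bisectorCenter ha hb hne habs,
    norm_sub_bisectorCenter_sq habs (norm_sub_sq_mul_eq_of_rho_eq ha hb hm (hm1.trans hm2.symm))⟩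

theorem stmt13 (a b : ℂ) (ha : ‖a‖ < 1) (hb : ‖b‖ < 1)
    (ha0 : a ≠ 0) (hb0 : b ≠ 0)
    (hnc : a * conj b ∉ Set.range (Complex.ofReal))
    (habs : ‖a‖ ≠ ‖b‖)
    (c : ℂ) (hc : c = LIS a b (endpt a b) (endpt b a))
    (m : ℂ) (hm : ‖m‖ < 1)
    (hm1 : rho a m = rho a b / 2) (hm2 : rho m b = rho a b / 2) :
    1 < ‖c‖ ∧ ‖m - c‖ ^ 2 = ‖c‖ ^ 2 - 1 :=
  stmt13_general a b ha hb hnc habs c hc m hm hm1 hm2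
end

section
/- Let a,b,c,d be points on the unit circle S¹ occurring in this positive order, and assume the three pairs of lines (L[a,b],L[c,d]), (L[a,c],L[b,d]), (L[a,d],L[b,c]) are each non-parallel (i.e., the denominators in the corresponding LIS expressions are nonzero). Put w₁ = LIS[a,b,c,d], w₂ = LIS[a,c,b,d], w₃ = LIS[a,d,b,c]. Then w₂ is the orthocenter of the triangle with vertices 0, w₁, w₃; equivalently, Re(w₂·conj(w₁ − w₃)) = 0, Re((w₂ − w₁)·conj(w₃)) = 0 and Re((w₂ − w₃)·conj(w₁)) = 0. -/
open ComplexConjugate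

lemma unit_circle_rel' (θ : ℝ) (a : ℂ) (h : a = Complex.exp (Complex.I * (θ : ℂ))) :
    a * conj a = 1 := by
  have hc : conj a = a⁻¹ := by
    subst h
    rw [← Complex.exp_conj, ← Complex.exp_neg]
    congr 1
    simp [Complex.conj_ofReal]
  rw [hc, mul_inv_cancel₀ (h ▸ Complex.exp_ne_zero _)]

lemma den_factor' (a b c d : ℂ)
    (haa : a * conj a = 1) (hbb : b * conj b = 1) (hcc : c * conj c = 1)
    (hdd : d * conj d = 1) (hden : LISden a b c d ≠ 0) :
    (a - b) ≠ 0 ∧ (c - d) ≠ 0 ∧ (a * b - c * d) ≠ 0 := by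
  have key : a * b * c * d * LISden a b c d = (a - b) * (c - d) * (a * b - c * d) := by
    rw [LISden]
    linear_combination ((-1)*b*c*d^2 + (1)*b*c^2*d) * haa + ((1)*a*c*d^2 + (-1)*a*c^2*d) * hbb +
      ((1)*a*b^2*d + (-1)*a^2*b*d) * hcc + ((-1)*a*b^2*c + (1)*a^2*b*c) * hdd
  have ha : a ≠ 0 := fun h => by simp [h] at haa
  have hb : b ≠ 0 := fun h => by simp [h] at hbb
  have hc : c ≠ 0 := fun h => by simp [h] at hcc
  have hd : d ≠ 0 := fun h => by simp [h] at hdd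
  have h : (a - b) * (c - d) * (a * b - c * d) ≠ 0 := by
    rw [← key]
    exact mul_ne_zero (mul_ne_zero (mul_ne_zero (mul_ne_zero ha hb) hc) hd) hden
  exact ⟨fun h1 => h (by rw [h1]; ring), fun h1 => h (by rw [h1]; ring),
    fun h1 => h (by rw [h1]; ring)⟩

lemma LIS_eq' (a b c d : ℂ)
    (haa : a * conj a = 1) (hbb : b * conj b = 1) (hcc : c * conj c = 1)
    (hdd : d * conj d = 1) (hden : LISden a b c d ≠ 0) :
    LIS a b c d = ((a + b) * c * d - (c + d) * a * b) / (c * d - a * b) := by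
  obtain ⟨-, -, habcd⟩ := den_factor' a b c d haa hbb hcc hdd hden
  have h2 : c * d - a * b ≠ 0 := fun h => habcd (by linear_combination -h)
  have hden' : ((conj a - conj b) * (c - d) - (conj c - conj d) * (a - b)) ≠ 0 := hden
  rw [LIS, div_eq_div_iff hden' h2]
  linear_combination
    ((1)*c*d^2 + (-1)*c^2*d + (-1)*b*d^2 + (1)*b*c^2 + (1)*b^2*d + (-1)*b^2*c) * haa +
    ((-1)*c*d^2 + (1)*c^2*d + (1)*a*d^2 + (-1)*a*c^2 + (-1)*a^2*d + (1)*a^2*c) * hbb +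
    ((1)*b*d^2 + (-1)*b^2*d + (-1)*a*d^2 + (1)*a*b^2 + (1)*a^2*d + (-1)*a^2*b) * hcc +
    ((-1)*b*c^2 + (1)*b^2*c + (1)*a*c^2 + (-1)*a*b^2 + (-1)*a^2*c + (1)*a^2*b) * hdd

lemma conj_LIS' (a b c d : ℂ)
    (haa : a * conj a = 1) (hbb : b * conj b = 1) (hcc : c * conj c = 1)
    (hdd : d * conj d = 1) (hD : a * b - c * d ≠ 0) :
    conj (((a + b) * c * d - (c + d) * a * b) / (c * d - a * b)) =
      (a + b - c - d) / (a * b - c * d) := by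
  have hD' : c * d - a * b ≠ 0 := fun h => hD (by linear_combination -h)
  rw [map_div₀, div_eq_div_iff (by simp only [ne_eq, map_eq_zero]; exact hD') hD]
  simp only [map_sub, map_add, map_mul]
  linear_combination
    ((1)*(conj b) + (1)*b*(conj c)*(conj d) + (-1)*b*(conj b)*(conj d) + (-1)*b*(conj b)*(conj c)) * haa +
    ((-1)*(conj d) + (-1)*(conj c) + (1)*(conj a) + (1)*a*(conj c)*(conj d)) * hbb +
    ((1)*(conj d) + (-1)*d*(conj b)*(conj d) + (-1)*d*(conj a)*(conj d) + (1)*d*(conj a)*(conj b)) * hcc +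
    ((1)*(conj c) + (-1)*(conj b) + (-1)*(conj a) + (1)*c*(conj a)*(conj b)) * hdd

lemma re_zero' (z : ℂ) (h : z + conj z = 0) : z.re = 0 := by
  have h2 := Complex.add_conj z
  rw [h] at h2
  simpa using h2.symm

set_option maxHeartbeats 2000000 in
theorem stmt14 (θ₁ θ₂ θ₃ θ₄ : ℝ)
    (h12 : θ₁ < θ₂) (h23 : θ₂ < θ₃) (h34 : θ₃ < θ₄) (h41 : θ₄ < θ₁ + 2 * Real.pi)
    (a b c d : ℂ)
    (hea : a = Complex.exp (Complex.I * (θ₁ : ℂ)))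
    (heb : b = Complex.exp (Complex.I * (θ₂ : ℂ)))
    (hec : c = Complex.exp (Complex.I * (θ₃ : ℂ)))
    (hed : d = Complex.exp (Complex.I * (θ₄ : ℂ)))
    (hden1 : LISden a b c d ≠ 0) (hden2 : LISden a c b d ≠ 0) (hden3 : LISden a d b c ≠ 0)
    (w₁ w₂ w₃ : ℂ)
    (hw1 : w₁ = LIS a b c d) (hw2 : w₂ = LIS a c b d) (hw3 : w₃ = LIS a d b c) :
    (w₂ * conj (w₁ - w₃)).re = 0 ∧
    ((w₂ - w₁) * conj w₃).re = 0 ∧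
    ((w₂ - w₃) * conj w₁).re = 0 := by
  have haa := unit_circle_rel' θ₁ a hea
  have hbb := unit_circle_rel' θ₂ b heb
  have hcc := unit_circle_rel' θ₃ c hec
  have hdd := unit_circle_rel' θ₄ d hed
  obtain ⟨hab, hcd2, hD1⟩ := den_factor' a b c d haa hbb hcc hdd hden1
  obtain ⟨hac, hbd, hD2⟩ := den_factor' a c b d haa hcc hbb hdd hden2
  obtain ⟨had, hbc, hD3⟩ := den_factor' a d b c haa hdd hbb hcc hden3
  rw [LIS_eq' a b c d haa hbb hcc hdd hden1] at hw1
  rw [LIS_eq' a c b d haa hcc hbb hdd hden2] at hw2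
  rw [LIS_eq' a d b c haa hdd hbb hcc hden3] at hw3
  have hcw1 : conj w₁ = (a + b - c - d) / (a * b - c * d) := by
    rw [hw1]; exact conj_LIS' a b c d haa hbb hcc hdd hD1
  have hcw2 : conj w₂ = (a + c - b - d) / (a * c - b * d) := by
    rw [hw2]; exact conj_LIS' a c b d haa hcc hbb hdd hD2
  have hcw3 : conj w₃ = (a + d - b - c) / (a * d - b * c) := by
    rw [hw3]; exact conj_LIS' a d b c haa hdd hbb hcc hD3
  -- rewrite the w's with the same denominators as the conjugates
  have hw1' : w₁ = ((c + d) * a * b - (a + b) * c * d) / (a * b - c * d) := by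
    rw [hw1, div_eq_div_iff (fun h => hD1 (by linear_combination -h)) hD1]; ring
  have hw2' : w₂ = ((b + d) * a * c - (a + c) * b * d) / (a * c - b * d) := by
    rw [hw2, div_eq_div_iff (fun h => hD2 (by linear_combination -h)) hD2]; ring
  have hw3' : w₃ = ((b + c) * a * d - (a + d) * b * c) / (a * d - b * c) := by
    rw [hw3, div_eq_div_iff (fun h => hD3 (by linear_combination -h)) hD3]; ring
  refine ⟨re_zero' _ ?_, re_zero' _ ?_, re_zero' _ ?_⟩
  · simp only [map_mul, map_sub, Complex.conj_conj]
    rw [hcw1, hcw3, hcw2, hw1', hw2', hw3']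
    simp only [div_sub_div _ _ hD1 hD3, div_sub_div _ _ hD3 hD1, div_sub_div _ _ hD1 hD2,
      div_sub_div _ _ hD2 hD1, div_sub_div _ _ hD2 hD3, div_sub_div _ _ hD3 hD2, div_mul_div_comm]
    rw [div_add_div _ _ (by apply_rules [mul_ne_zero]) (by apply_rules [mul_ne_zero]), div_eq_zero_iff]
    left
    ring
  · simp only [map_mul, map_sub, Complex.conj_conj]
    rw [hcw1, hcw3, hcw2, hw1', hw2', hw3']
    simp only [div_sub_div _ _ hD1 hD3, div_sub_div _ _ hD3 hD1, div_sub_div _ _ hD1 hD2,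
      div_sub_div _ _ hD2 hD1, div_sub_div _ _ hD2 hD3, div_sub_div _ _ hD3 hD2, div_mul_div_comm]
    rw [div_add_div _ _ (by apply_rules [mul_ne_zero]) (by apply_rules [mul_ne_zero]), div_eq_zero_iff]
    left
    ring
  · simp only [map_mul, map_sub, Complex.conj_conj]
    rw [hcw1, hcw3, hcw2, hw1', hw2', hw3']
    simp only [div_sub_div _ _ hD1 hD3, div_sub_div _ _ hD3 hD1, div_sub_div _ _ hD1 hD2,
      div_sub_div _ _ hD2 hD1, div_sub_div _ _ hD2 hD3, div_sub_div _ _ hD3 hD2, div_mul_div_comm]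
    rw [div_add_div _ _ (by apply_rules [mul_ne_zero]) (by apply_rules [mul_ne_zero]), div_eq_zero_iff]
    left
    ring
end

section
/- Let a,b ∈ 𝔹² with a ≠ b, and set m = (a(1+|b|²) + b(1+|a|²))/(|1 + a·conj(b)|·√((1+|a|²)(1+|b|²)) − |ab|² + 1). Then m is the chordal midpoint of a and b: q(a,m) = q(b,m), and π(m) is the midpoint of the shorter arc between π(a) and π(b) of the great circle through them, in the sense that there exists a real λ > 0 with π(m) − (0,0,1/2) = λ·((π(a) − (0,0,1/2)) + (π(b) − (0,0,1/2))). -/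
/-!
Write `w = a (1 + |b|²) + b (1 + |a|²)`, `t = |a|² |b|²` and `D` for the denominator, so that
`m = w / D`. Since `|1 + a b̄|² (1 + |a|²) (1 + |b|²) = (1 - t)² + |w|²`, the denominator is
`D = √((1 - t)² + |w|²) + 1 - t`, the root of `D² + 2 (t - 1) D = |w|²`, positive when `t < 1`.
This one relation gives both claims: `|D a - w|² (1 + |b|²) - |D b - w|² (1 + |a|²)` equals
`(|a|² - |b|²) (D² + 2 (t - 1) D - |w|²)`, and `π(w / D) - c` and `(π(a) - c) + (π(b) - c)`
are both positive multiples of `(Re w, Im w, t - 1)`.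
-/

open ComplexConjugate

/-- The chordal (spherical) metric on the complex plane. -/
noncomputable def chordal (x y : ℂ) : ℝ :=
  ‖x - y‖ /
    (Real.sqrt (1 + ‖x‖ ^ 2) * Real.sqrt (1 + ‖y‖ ^ 2))

/-- The stereographic projection of the complex plane onto the Riemann sphere
with center `(0, 0, 1/2)` and radius `1/2` in `ℝ³`. -/
noncomputable def stereo (z : ℂ) : ℝ × ℝ × ℝ :=
  (z.re / (1 + ‖z‖ ^ 2), z.im / (1 + ‖z‖ ^ 2),
    ‖z‖ ^ 2 / (1 + ‖z‖ ^ 2))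

theorem chordal_eq_chordal_iff (a b z : ℂ) :
    chordal a z = chordal b z ↔
      ‖a - z‖ ^ 2 * (1 + ‖b‖ ^ 2) = ‖b - z‖ ^ 2 * (1 + ‖a‖ ^ 2) := by
  rw [chordal, chordal, ← div_div, ← div_div, div_left_inj' (by positivity),
    div_eq_div_iff (by positivity) (by positivity),
    ← pow_left_inj₀ (by positivity) (by positivity) two_ne_zero, mul_pow, mul_pow,
    Real.sq_sqrt (by positivity), Real.sq_sqrt (by positivity)]

theorem stereo_sub_center (z : ℂ) :
    stereo z - (0, 0, 1 / 2) = (1 + ‖z‖ ^ 2)⁻¹ • (z.re, z.im, (‖z‖ ^ 2 - 1) / 2) := by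
  have : 1 + ‖z‖ ^ 2 ≠ 0 := by positivity
  simp only [stereo, Prod.mk_sub_mk, Prod.smul_mk, smul_eq_mul, sub_zero, Prod.mk.injEq]
  refine ⟨by ring, by ring, by field_simp; ring⟩

noncomputable def midpointNumerator (a b : ℂ) : ℂ :=
  a * (1 + (‖b‖ : ℂ) ^ 2) + b * (1 + (‖a‖ : ℂ) ^ 2)

theorem midpointNumerator_re (a b : ℂ) :
    (midpointNumerator a b).re = a.re * (1 + ‖b‖ ^ 2) + b.re * (1 + ‖a‖ ^ 2) := by
  simp [midpointNumerator, ← Complex.ofReal_pow]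

theorem midpointNumerator_im (a b : ℂ) :
    (midpointNumerator a b).im = a.im * (1 + ‖b‖ ^ 2) + b.im * (1 + ‖a‖ ^ 2) := by
  simp [midpointNumerator, ← Complex.ofReal_pow]

theorem sq_norm_one_add_mul_conj_mul (a b : ℂ) :
    ‖1 + a * conj b‖ ^ 2 * ((1 + ‖a‖ ^ 2) * (1 + ‖b‖ ^ 2)) =
      (1 - ‖a‖ ^ 2 * ‖b‖ ^ 2) ^ 2 + ‖midpointNumerator a b‖ ^ 2 := by
  simp only [Complex.sq_norm, Complex.normSq_apply, midpointNumerator_re, midpointNumerator_im,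
    Complex.add_re, Complex.add_im, Complex.mul_re, Complex.mul_im, Complex.one_re,
    Complex.one_im, Complex.conj_re, Complex.conj_im]
  ring

noncomputable def midpointDenom (a b : ℂ) : ℝ :=
  ‖1 + a * conj b‖ * √((1 + ‖a‖ ^ 2) * (1 + ‖b‖ ^ 2)) - ‖a * b‖ ^ 2 + 1

theorem midpointDenom_pos {a b : ℂ} (ha : ‖a‖ < 1) (hb : ‖b‖ < 1) : 0 < midpointDenom a b := by
  have : ‖a * b‖ < 1 := by
    rw [norm_mul]; exact mul_lt_one_of_nonneg_of_lt_one_left (norm_nonneg a) ha hb.le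
  have : ‖a * b‖ ^ 2 < 1 := pow_lt_one₀ (norm_nonneg _) this two_ne_zero
  unfold midpointDenom
  have : 0 ≤ ‖1 + a * conj b‖ * √((1 + ‖a‖ ^ 2) * (1 + ‖b‖ ^ 2)) := by positivity
  linarith

theorem sq_norm_midpointNumerator (a b : ℂ) :
    ‖midpointNumerator a b‖ ^ 2 =
      midpointDenom a b ^ 2 + 2 * midpointDenom a b * (‖a‖ ^ 2 * ‖b‖ ^ 2 - 1) := by
  have hS : √((1 + ‖a‖ ^ 2) * (1 + ‖b‖ ^ 2)) ^ 2 = (1 + ‖a‖ ^ 2) * (1 + ‖b‖ ^ 2) :=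
    Real.sq_sqrt (by positivity)
  rw [midpointDenom, norm_mul, mul_pow]
  linear_combination (-1 : ℝ) * sq_norm_one_add_mul_conj_mul a b - ‖1 + a * conj b‖ ^ 2 * hS

theorem sq_norm_ofReal_mul_sub_midpointNumerator_sub (a b : ℂ) (D : ℝ) :
    ‖D * a - midpointNumerator a b‖ ^ 2 * (1 + ‖b‖ ^ 2) -
        ‖D * b - midpointNumerator a b‖ ^ 2 * (1 + ‖a‖ ^ 2) =
      (‖a‖ ^ 2 - ‖b‖ ^ 2) *
        (D ^ 2 + 2 * D * (‖a‖ ^ 2 * ‖b‖ ^ 2 - 1) - ‖midpointNumerator a b‖ ^ 2) := by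
  simp only [Complex.sq_norm, Complex.normSq_apply, midpointNumerator_re, midpointNumerator_im,
    Complex.sub_re, Complex.sub_im, Complex.mul_re, Complex.mul_im, Complex.ofReal_re,
    Complex.ofReal_im]
  ring

theorem chordal_midpointNumerator_div_eq {a b : ℂ} {D : ℝ} (hD : D ≠ 0)
    (hw : ‖midpointNumerator a b‖ ^ 2 = D ^ 2 + 2 * D * (‖a‖ ^ 2 * ‖b‖ ^ 2 - 1)) :
    chordal a (midpointNumerator a b / D) = chordal b (midpointNumerator a b / D) := by
  have hD' : (D : ℂ) ≠ 0 := Complex.ofReal_ne_zero.mpr hD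
  have hsub (z : ℂ) : z - midpointNumerator a b / D = (D * z - midpointNumerator a b) / D := by
    field_simp
  rw [chordal_eq_chordal_iff, hsub, hsub, norm_div, norm_div, div_pow, div_pow,
    div_mul_eq_mul_div, div_mul_eq_mul_div, div_left_inj' (by positivity), ← sub_eq_zero,
    sq_norm_ofReal_mul_sub_midpointNumerator_sub, hw, sub_self, mul_zero]

theorem stereo_sub_center_add_stereo_sub_center (a b : ℂ) :
    stereo a - (0, 0, 1 / 2) + (stereo b - (0, 0, 1 / 2)) =
      ((1 + ‖a‖ ^ 2) * (1 + ‖b‖ ^ 2))⁻¹ •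
        ((midpointNumerator a b).re, (midpointNumerator a b).im, ‖a‖ ^ 2 * ‖b‖ ^ 2 - 1) := by
  have : 1 + ‖a‖ ^ 2 ≠ 0 := by positivity
  have : 1 + ‖b‖ ^ 2 ≠ 0 := by positivity
  simp only [stereo_sub_center, midpointNumerator_re, midpointNumerator_im, Prod.smul_mk,
    Prod.mk_add_mk, smul_eq_mul, Prod.mk.injEq]
  refine ⟨?_, ?_, ?_⟩
  · field_simp
  · field_simp
  · field_simp; ring

theorem stereo_div_sub_center {w : ℂ} {t D : ℝ} (hD : D ≠ 0)
    (hw : ‖w‖ ^ 2 = D ^ 2 + 2 * D * (t - 1)) :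
    stereo (w / D) - (0, 0, 1 / 2) = ((1 + ‖w / D‖ ^ 2) * D)⁻¹ • (w.re, w.im, t - 1) := by
  have : 1 + ‖w / D‖ ^ 2 ≠ 0 := by positivity
  simp only [stereo_sub_center, Prod.smul_mk, smul_eq_mul, Prod.mk.injEq, Complex.div_ofReal_re,
    Complex.div_ofReal_im, norm_div, Complex.norm_real, Real.norm_eq_abs, div_pow, sq_abs]
  refine ⟨?_, ?_, ?_⟩
  · field_simp
  · field_simp
  · rw [hw]; field_simp; ring

theorem stmt18_general (a b : ℂ) (ha : ‖a‖ < 1) (hb : ‖b‖ < 1)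
    (m : ℂ)
    (hm : m = (a * (1 + (‖b‖ : ℂ) ^ 2) + b * (1 + (‖a‖ : ℂ) ^ 2)) /
      ((‖1 + a * conj b‖ *
          Real.sqrt ((1 + ‖a‖ ^ 2) * (1 + ‖b‖ ^ 2)) -
        ‖a * b‖ ^ 2 + 1 : ℝ) : ℂ)) :
    chordal a m = chordal b m ∧
    ∃ l : ℝ, 0 < l ∧
      stereo m - ((0 : ℝ), (0 : ℝ), (1 / 2 : ℝ)) =
        l • ((stereo a - ((0 : ℝ), (0 : ℝ), (1 / 2 : ℝ))) +
          (stereo b - ((0 : ℝ), (0 : ℝ), (1 / 2 : ℝ)))) := by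
  change m = midpointNumerator a b / (midpointDenom a b : ℂ) at hm
  have hD := midpointDenom_pos ha hb
  have hw := sq_norm_midpointNumerator a b
  refine ⟨hm ▸ chordal_midpointNumerator_div_eq hD.ne' hw, ?_⟩
  refine ⟨(1 + ‖a‖ ^ 2) * (1 + ‖b‖ ^ 2) / ((1 + ‖m‖ ^ 2) * midpointDenom a b), by positivity, ?_⟩
  rw [stereo_sub_center_add_stereo_sub_center, smul_smul, hm, stereo_div_sub_center hD.ne' hw]
  congr 1
  field_simp

theorem stmt18 (a b : ℂ) (ha : ‖a‖ < 1) (hb : ‖b‖ < 1) (hab : a ≠ b)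
    (m : ℂ)
    (hm : m = (a * (1 + (‖b‖ : ℂ) ^ 2) + b * (1 + (‖a‖ : ℂ) ^ 2)) /
      ((‖1 + a * conj b‖ *
          Real.sqrt ((1 + ‖a‖ ^ 2) * (1 + ‖b‖ ^ 2)) -
        ‖a * b‖ ^ 2 + 1 : ℝ) : ℂ)) :
    chordal a m = chordal b m ∧
    ∃ l : ℝ, 0 < l ∧
      stereo m - ((0 : ℝ), (0 : ℝ), (1 / 2 : ℝ)) =
        l • ((stereo a - ((0 : ℝ), (0 : ℝ), (1 / 2 : ℝ))) +
          (stereo b - ((0 : ℝ), (0 : ℝ), (1 / 2 : ℝ)))) :=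
  stmt18_general a b ha hb m hm
end
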